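/- arXiv:1811.01706 — 7 statements merged into one kernel-verified Lean document; each statement's English description precedes it below -/
import Mathlib

section
/- Let g ≥ 2 and let F be the free group on g generators α₁, …, α_g. For every integer k ≥ 2 and all natural numbers ℓ, j, there exists an element h of F such that h⁻¹ · (α₁ · α₂^(−ℓ) · α₁^(k−1) · α₂^ℓ) · h = α₁ · α₂^(−j) · α₁^(k−1) · α₂^j if and only if ℓ = j. -/
open Matrix

private lemma diagPow (a b : ℚ) (n : ℕ) : (!![a,0;0,b])^n = !![a^n,0;0,b^n] := by
  induction n with
  | zero => simp [Matrix.one_fin_two]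
  | succ n ih => rw [pow_succ, ih, Matrix.mul_fin_two]; ring_nf

private lemma powA : ∀ n : ℕ, ∃ q r : ℚ,
    (!![(2:ℚ),1;1,1])^(n+1) = !![q+r,q;q,r] ∧ 1 ≤ q ∧ 1 ≤ r := by
  intro n
  induction n with
  | zero => exact ⟨1, 1, by norm_num, le_refl 1, le_refl 1⟩
  | succ n ih =>
    obtain ⟨q, r, hA, hq, hr⟩ := ih
    refine ⟨2*q+r, q+r, ?_, by linarith, by linarith⟩
    rw [pow_succ, hA, Matrix.mul_fin_two]
    congr 1 <;> ring_nf

private lemma traceConj (u x : (Matrix (Fin 2) (Fin 2) ℚ)ˣ) :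
    Matrix.trace ((u⁻¹ * x * u : _ˣ) : Matrix (Fin 2) (Fin 2) ℚ)
      = Matrix.trace ((x : _ˣ) : Matrix (Fin 2) (Fin 2) ℚ) := by
  rw [Units.val_mul, Units.val_mul, Matrix.trace_mul_cycle, ← Units.val_mul,
    mul_inv_cancel, Units.val_one, one_mul]

private lemma traceWord (q r : ℚ) (m : ℕ) :
    Matrix.trace ((!![(2:ℚ),1;1,1]) * (!![(2:ℚ)⁻¹,0;0,2])^m * !![q+r,q;q,r] *
        (!![(2:ℚ),0;0,2⁻¹])^m)
      = 2*(q+r) + r + q*((4:ℚ)^m + (4:ℚ)⁻¹^m) := by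
  have h1 : (1/2:ℚ)^m * 2^m = 1 := by rw [← mul_pow]; norm_num
  have h2 : (2:ℚ)^(m*2) = 4^m := by rw [mul_comm, pow_mul]; norm_num
  have h3 : (1/2:ℚ)^(m*2) = (1/4)^m := by rw [mul_comm, pow_mul]; norm_num
  rw [diagPow, diagPow, Matrix.mul_fin_two, Matrix.mul_fin_two, Matrix.mul_fin_two,
    Matrix.trace_fin_two_of]
  ring_nf
  linear_combination (2*q+3*r)*h1 + q*h2 + q*h3

private lemma fourInj {a b : ℕ} (hab : a < b) :
    (4:ℚ)^a + (4:ℚ)⁻¹^a < 4^b + (4:ℚ)⁻¹^b := by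
  have h1 : (4:ℚ)⁻¹^a ≤ 1 := by
    apply pow_le_one₀ <;> norm_num
  have h2 : (0:ℚ) < (4:ℚ)⁻¹^b := by positivity
  have h3 : (4:ℚ)^(a+1) ≤ 4^b := by
    apply pow_le_pow_right₀ (by norm_num) (by omega)
  have h4 : (1:ℚ) ≤ 4^a := one_le_pow₀ (by norm_num)
  rw [pow_succ] at h3
  nlinarith

/-- **Nonconjugacy along a conjugation orbit in a free group.**
In the free group on `g ≥ 2` generators, with `α₁`, `α₂` the first two generators,
for `k ≥ 2` and `ℓ, j ∈ ℕ`, the elements `α₁ α₂^(−ℓ) α₁^(k−1) α₂^ℓ` and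
`α₁ α₂^(−j) α₁^(k−1) α₂^j` are conjugate if and only if `ℓ = j`. -/
theorem freeGroup_conjugate_iff (g : ℕ) (hg : 2 ≤ g) (k : ℕ) (hk : 2 ≤ k) (ℓ j : ℕ) :
    (∃ h : FreeGroup (Fin g),
        h⁻¹ *
            (FreeGroup.of (⟨0, by omega⟩ : Fin g) *
              FreeGroup.of (⟨1, by omega⟩ : Fin g) ^ (-(ℓ : ℤ)) *
              FreeGroup.of (⟨0, by omega⟩ : Fin g) ^ (k - 1) *
              FreeGroup.of (⟨1, by omega⟩ : Fin g) ^ (ℓ : ℤ)) * h =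
          FreeGroup.of (⟨0, by omega⟩ : Fin g) *
            FreeGroup.of (⟨1, by omega⟩ : Fin g) ^ (-(j : ℤ)) *
            FreeGroup.of (⟨0, by omega⟩ : Fin g) ^ (k - 1) *
            FreeGroup.of (⟨1, by omega⟩ : Fin g) ^ (j : ℤ)) ↔
      ℓ = j := by
  constructor
  · rintro ⟨h, hconj⟩
    -- representation into 2x2 rational matrices
    set Au : (Matrix (Fin 2) (Fin 2) ℚ)ˣ :=
      ⟨!![2,1;1,1], !![1,-1;-1,2],
        by rw [Matrix.mul_fin_two, Matrix.one_fin_two]; norm_num,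
        by rw [Matrix.mul_fin_two, Matrix.one_fin_two]; norm_num⟩ with hAu
    set Bu : (Matrix (Fin 2) (Fin 2) ℚ)ˣ :=
      ⟨!![2,0;0,2⁻¹], !![2⁻¹,0;0,2],
        by rw [Matrix.mul_fin_two, Matrix.one_fin_two]; norm_num,
        by rw [Matrix.mul_fin_two, Matrix.one_fin_two]; norm_num⟩ with hBu
    set ρ : FreeGroup (Fin g) →* (Matrix (Fin 2) (Fin 2) ℚ)ˣ :=
      FreeGroup.lift (fun i : Fin g => if (i : ℕ) = 0 then Au else
        if (i : ℕ) = 1 then Bu else 1) with hρ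
    have hA0 : ρ (FreeGroup.of (⟨0, by omega⟩ : Fin g)) = Au := by
      rw [hρ, FreeGroup.lift_apply_of]; norm_num
    have hB1 : ρ (FreeGroup.of (⟨1, by omega⟩ : Fin g)) = Bu := by
      rw [hρ, FreeGroup.lift_apply_of]; norm_num
    have him := congrArg ρ hconj
    simp only [_root_.map_mul, map_pow, map_zpow, map_inv, hA0, hB1] at him
    -- traces are conjugation invariant
    have htr : Matrix.trace ((Au * Bu^(-(ℓ:ℤ)) * Au^(k-1) * Bu^(ℓ:ℤ) : _ˣ) :
          Matrix (Fin 2) (Fin 2) ℚ)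
        = Matrix.trace ((Au * Bu^(-(j:ℤ)) * Au^(k-1) * Bu^(j:ℤ) : _ˣ) :
          Matrix (Fin 2) (Fin 2) ℚ) := by
      rw [← him, traceConj]
    -- compute the traces
    obtain ⟨q, r, hM, hq, hr⟩ := powA (k - 2)
    have hk1 : k - 2 + 1 = k - 1 := by omega
    rw [hk1] at hM
    have hzl : ∀ n : ℕ, (Bu^(-(n:ℤ)) : (Matrix (Fin 2) (Fin 2) ℚ)ˣ) = (Bu⁻¹)^n := by
      intro n; rw [_root_.zpow_neg, zpow_natCast, inv_pow]
    have hval : ∀ n : ℕ,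
        ((Au * Bu^(-(n:ℤ)) * Au^(k-1) * Bu^(n:ℤ) : _ˣ) : Matrix (Fin 2) (Fin 2) ℚ)
          = (!![(2:ℚ),1;1,1]) * (!![(2:ℚ)⁻¹,0;0,2])^n * !![q+r,q;q,r] *
            (!![(2:ℚ),0;0,2⁻¹])^n := by
      intro n
      rw [hzl, zpow_natCast, Units.val_mul, Units.val_mul, Units.val_mul,
        Units.val_pow_eq_pow_val, Units.val_pow_eq_pow_val, Units.val_pow_eq_pow_val]
      rw [show ((Au : _ˣ) : Matrix (Fin 2) (Fin 2) ℚ) = !![(2:ℚ),1;1,1] from rfl,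
        show ((Bu⁻¹ : _ˣ) : Matrix (Fin 2) (Fin 2) ℚ) = !![(2:ℚ)⁻¹,0;0,2] from rfl,
        show ((Bu : _ˣ) : Matrix (Fin 2) (Fin 2) ℚ) = !![(2:ℚ),0;0,2⁻¹] from rfl, hM]
    rw [hval ℓ, hval j, traceWord, traceWord] at htr
    have heq : (4:ℚ)^ℓ + (4:ℚ)⁻¹^ℓ = (4:ℚ)^j + (4:ℚ)⁻¹^j := by
      have hq0 : q ≠ 0 := by linarith
      exact mul_left_cancel₀ hq0 (by linarith)
    by_contra hne
    rcases lt_or_gt_of_ne hne with hlt | hlt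
    · exact absurd heq (ne_of_lt (fourInj hlt))
    · exact absurd heq.symm (ne_of_lt (fourInj hlt))
  · rintro rfl
    exact ⟨1, by group⟩
end

section
/- Let m ≥ 1. For all z, w ∈ ℝ^m with ‖z‖ = ‖w‖ = 1 and all s, t ∈ ℝ, the squared Euclidean distance in ℝ^m × ℝ between the points (w · sech t, tanh t) and (z · sech s, tanh s) equals sech t · sech s · ( (2 sinh((t − s)/2))² + ‖w − z‖² ), where sech r = 1 / cosh r. -/
open Real

theorem norm_smul_sub_smul_sq_of_norm_eq_one {E : Type*} [NormedAddCommGroup E]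
    [InnerProductSpace ℝ E] {w z : E} (hw : ‖w‖ = 1) (hz : ‖z‖ = 1) (a b : ℝ) :
    ‖a • w - b • z‖ ^ 2 = (a - b) ^ 2 + a * b * ‖w - z‖ ^ 2 := by
  rw [norm_sub_sq_real, norm_sub_sq_real, norm_smul, norm_smul, real_inner_smul_left,
    real_inner_smul_right, hw, hz, Real.norm_eq_abs, Real.norm_eq_abs, mul_one, mul_one,
    sq_abs, sq_abs]
  ring

theorem sq_two_mul_sinh_half (x : ℝ) : (2 * sinh (x / 2)) ^ 2 = 2 * (cosh x - 1) := by
  have hcosh : cosh x = cosh (x / 2) ^ 2 + sinh (x / 2) ^ 2 := by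
    rw [← cosh_two_mul, mul_div_cancel₀ x two_ne_zero]
  rw [hcosh, cosh_sq]
  ring

theorem inv_cosh_sub_sq_add_tanh_sub_sq (s t : ℝ) :
    ((cosh t)⁻¹ - (cosh s)⁻¹) ^ 2 + (tanh t - tanh s) ^ 2 =
      (cosh t)⁻¹ * (cosh s)⁻¹ * (2 * (cosh (t - s) - 1)) := by
  have hct := (cosh_pos t).ne'
  have hcs := (cosh_pos s).ne'
  rw [tanh_eq_sinh_div_cosh, tanh_eq_sinh_div_cosh, cosh_sub]
  field_simp
  linear_combination (-(cosh s ^ 2)) * cosh_sq t - cosh t ^ 2 * cosh_sq s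

theorem mercator_distance_identity_general (m : ℕ)
    (z w : EuclideanSpace ℝ (Fin m)) (hz : ‖z‖ = 1) (hw : ‖w‖ = 1) (s t : ℝ) :
    ‖(Real.cosh t)⁻¹ • w - (Real.cosh s)⁻¹ • z‖ ^ 2 + (Real.tanh t - Real.tanh s) ^ 2 =
      (Real.cosh t)⁻¹ * (Real.cosh s)⁻¹ *
        ((2 * Real.sinh ((t - s) / 2)) ^ 2 + ‖w - z‖ ^ 2) := by
  rw [norm_smul_sub_smul_sq_of_norm_eq_one hw hz, sq_two_mul_sinh_half]
  linear_combination inv_cosh_sub_sq_add_tanh_sub_sq s t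

/-- **Distance identity for the Mercator cylindrical projection.**
For unit vectors `z, w ∈ ℝ^m` and reals `s, t`, the squared Euclidean distance in
`ℝ^m × ℝ` between `(w sech t, tanh t)` and `(z sech s, tanh s)` equals
`sech t · sech s · ((2 sinh((t − s)/2))² + ‖w − z‖²)`. -/
theorem mercator_distance_identity (m : ℕ) (hm : 1 ≤ m)
    (z w : EuclideanSpace ℝ (Fin m)) (hz : ‖z‖ = 1) (hw : ‖w‖ = 1) (s t : ℝ) :
    ‖(Real.cosh t)⁻¹ • w - (Real.cosh s)⁻¹ • z‖ ^ 2 + (Real.tanh t - Real.tanh s) ^ 2 =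
      (Real.cosh t)⁻¹ * (Real.cosh s)⁻¹ *
        ((2 * Real.sinh ((t - s) / 2)) ^ 2 + ‖w - z‖ ^ 2) :=
  mercator_distance_identity_general m z w hz hw s t
end

section
/- Let m ≥ 1, ν ≥ 1, let f : S^m → ℝ^ν be a continuous map, and let F be its hyperharmonic extension, F(z) = (1 − ‖z‖²)^m / σ(S^m) · ∫_{S^m} f(y) / ‖z − y‖^{2m} dσ(y) for ‖z‖ < 1. Then for every ε > 0, every x ∈ S^m and every r ∈ [0, 1), the distance from F(r·x) to the image set f(S^m) satisfies dist(F(r·x), f(S^m)) ≤ ε + (1 − r²)^m · 4^m / σ(S^m) · ∫_{S^m} (‖f(y) − f(x)‖ − ε)₊ / ‖y − x‖^{2m} dσ(y). -/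
open MeasureTheory Metric Real Module
open scoped RealInnerProductSpace

variable {E : Type*} [NormedAddCommGroup E] [InnerProductSpace ℝ E]

/-- Rotation by angle `s` in the plane spanned by the orthonormal pair `x, b`. -/
noncomputable def rotAux (x b : E) (s : ℝ) : E →ₗ[ℝ] E where
  toFun y := y + ((Real.cos s - 1) * ⟪x, y⟫ - Real.sin s * ⟪b, y⟫) • x
      + (Real.sin s * ⟪x, y⟫ + (Real.cos s - 1) * ⟪b, y⟫) • b
  map_add' y z := by
    simp only [inner_add_right, mul_add]
    module
  map_smul' c y := by
    simp only [real_inner_smul_right, RingHom.id_apply, smul_add, smul_smul]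
    module

lemma rotAux_apply (x b : E) (s : ℝ) (y : E) :
    rotAux x b s y = y + ((Real.cos s - 1) * ⟪x, y⟫ - Real.sin s * ⟪b, y⟫) • x
      + (Real.sin s * ⟪x, y⟫ + (Real.cos s - 1) * ⟪b, y⟫) • b := rfl

lemma rotAux_inner (x b : E) (hx : ‖x‖ = 1) (hb : ‖b‖ = 1) (hxb : ⟪x, b⟫ = 0)
    (s : ℝ) (y z : E) : ⟪rotAux x b s y, rotAux x b s z⟫ = ⟪y, z⟫ := by
  have hxx : ⟪x, x⟫ = 1 := by
    rw [real_inner_self_eq_norm_mul_norm, hx]; norm_num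
  have hbb : ⟪b, b⟫ = 1 := by
    rw [real_inner_self_eq_norm_mul_norm, hb]; norm_num
  have hbx : ⟪b, x⟫ = 0 := by rw [real_inner_comm]; exact hxb
  simp only [rotAux_apply, inner_add_left, inner_add_right, real_inner_smul_left,
    real_inner_smul_right, hxx, hbb, hxb, hbx, real_inner_comm x y, real_inner_comm b y,
    real_inner_comm x z, real_inner_comm b z]
  linear_combination (⟪x, y⟫ * ⟪x, z⟫ + ⟪b, y⟫ * ⟪b, z⟫) * (Real.sin_sq_add_cos_sq s)
open scoped RealInnerProductSpace Pointwise

/-- The unit sphere `S^n ⊂ ℝ^{n+1}`. -/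
abbrev unitSphere (n : ℕ) : Set (EuclideanSpace ℝ (Fin (n + 1))) :=
  Metric.sphere (0 : EuclideanSpace ℝ (Fin (n + 1))) 1

/-- The canonical surface measure on the unit sphere `S^n ⊂ ℝ^{n+1}`. -/
noncomputable def sphereMeasure (n : ℕ) : Measure (unitSphere n) :=
  (volume : Measure (EuclideanSpace ℝ (Fin (n + 1)))).toSphere

variable {m : ℕ}

noncomputable def sphereMap (e : EuclideanSpace ℝ (Fin (m + 1)) ≃ₗᵢ[ℝ] EuclideanSpace ℝ (Fin (m + 1))) :
    unitSphere m → unitSphere m := fun y =>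
  ⟨e ↑y, by
    have hy : ‖(y : EuclideanSpace ℝ (Fin (m + 1)))‖ = 1 := mem_sphere_zero_iff_norm.mp y.2
    simpa [mem_sphere_zero_iff_norm, e.norm_map] using hy⟩

lemma continuous_sphereMap (e : EuclideanSpace ℝ (Fin (m + 1)) ≃ₗᵢ[ℝ] EuclideanSpace ℝ (Fin (m + 1))) :
    Continuous (sphereMap e) :=
  (e.continuous.comp continuous_subtype_val).subtype_mk _

lemma measurePreserving_sphereMap
    (e : EuclideanSpace ℝ (Fin (m + 1)) ≃ₗᵢ[ℝ] EuclideanSpace ℝ (Fin (m + 1))) :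
    MeasurePreserving (sphereMap e) (sphereMeasure m) (sphereMeasure m) := by
  refine ⟨(continuous_sphereMap e).measurable, ?_⟩
  ext s hs
  rw [Measure.map_apply (continuous_sphereMap e).measurable hs]
  rw [sphereMeasure, Measure.toSphere_apply' _ ((continuous_sphereMap e).measurable hs),
    Measure.toSphere_apply' _ hs]
  congr 1
  have himg : (Subtype.val '' (sphereMap e ⁻¹' s))
      = ⇑e.symm '' (Subtype.val '' s) := by
    ext z
    constructor
    · rintro ⟨w, hw, rfl⟩
      exact ⟨e ↑w, ⟨sphereMap e w, hw, rfl⟩, by simp⟩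
    · rintro ⟨v, ⟨w, hw, rfl⟩, rfl⟩
      have hmem : e.symm ↑w ∈ unitSphere m := by
        have hw1 : ‖(w : EuclideanSpace ℝ (Fin (m + 1)))‖ = 1 := mem_sphere_zero_iff_norm.mp w.2
        simpa [mem_sphere_zero_iff_norm, e.symm.norm_map] using hw1
      refine ⟨⟨e.symm ↑w, hmem⟩, ?_, rfl⟩
      show sphereMap e _ ∈ s
      have heq : sphereMap e ⟨e.symm ↑w, hmem⟩ = w := by
        apply Subtype.ext
        show e (e.symm ↑w) = ↑w
        simp
      rw [heq]; exact hw
  rw [himg]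
  have hsmul : (Set.Ioo (0:ℝ) 1) • (⇑e.symm '' (Subtype.val '' s))
      = ⇑e.symm '' ((Set.Ioo (0:ℝ) 1) • (Subtype.val '' s)) := by
    ext z
    simp only [Set.mem_smul, Set.mem_image]
    constructor
    · rintro ⟨c, hc, v, ⟨a, ha, rfl⟩, rfl⟩
      exact ⟨c • a, ⟨c, hc, a, ha, rfl⟩, by simp⟩
    · rintro ⟨v, ⟨c, hc, a, ha, rfl⟩, rfl⟩
      exact ⟨c, hc, e.symm a, ⟨a, ha, rfl⟩, by simp⟩
  rw [hsmul]
  have hpre : ⇑e.symm '' ((Set.Ioo (0:ℝ) 1) • (Subtype.val '' s))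
      = ⇑e ⁻¹' ((Set.Ioo (0:ℝ) 1) • (Subtype.val '' s)) := by
    ext z
    constructor
    · rintro ⟨w, hw, rfl⟩
      simpa using hw
    · intro hz
      exact ⟨e z, hz, by simp⟩
  rw [hpre]
  exact (e.measurePreserving).measure_preimage_emb e.toHomeomorph.measurableEmbedding _

lemma integral_sphereMap
    (e : EuclideanSpace ℝ (Fin (m + 1)) ≃ₗᵢ[ℝ] EuclideanSpace ℝ (Fin (m + 1)))
    (g : unitSphere m → ℝ) (hg : Continuous g) :
    ∫ y, g (sphereMap e y) ∂(sphereMeasure m) = ∫ y, g y ∂(sphereMeasure m) := by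
  conv_rhs => rw [← (measurePreserving_sphereMap e).map_eq]
  exact (integral_map (continuous_sphereMap e).measurable.aemeasurable
    hg.aestronglyMeasurable).symm

lemma exists_orthonormal_complement_basis (x : EuclideanSpace ℝ (Fin (m + 1))) (hx : ‖x‖ = 1) :
    ∃ b : Fin m → EuclideanSpace ℝ (Fin (m + 1)),
      (∀ i, ‖b i‖ = 1) ∧ (∀ i, ⟪x, b i⟫ = 0) ∧
      ∀ y : EuclideanSpace ℝ (Fin (m + 1)), ‖y‖ = 1 →
        ⟪x, y⟫ ^ 2 + ∑ i, ⟪b i, y⟫ ^ 2 = 1 := by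
  haveI : Fact (finrank ℝ (EuclideanSpace ℝ (Fin (m + 1))) = m + 1) :=
    ⟨finrank_euclideanSpace_fin⟩
  have hx0 : x ≠ 0 := by intro h; rw [h, norm_zero] at hx; norm_num at hx
  set B := OrthonormalBasis.fromOrthogonalSpanSingleton (𝕜 := ℝ) m hx0 with hB
  refine ⟨fun i => ↑(B i), fun i => ?_, fun i => ?_, fun y hy => ?_⟩
  · exact B.orthonormal.1 i
  · have := (B i).2
    exact (Submodule.mem_orthogonal_singleton_iff_inner_right.mp this)
  · -- Parseval
    set t := ⟪x, y⟫ with ht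
    set w : EuclideanSpace ℝ (Fin (m + 1)) := y - t • x with hw
    have hxx : ⟪x, x⟫ = 1 := by
      rw [real_inner_self_eq_norm_mul_norm, hx]; norm_num
    have hxw : ⟪x, w⟫ = 0 := by
      rw [hw, inner_sub_right, real_inner_smul_right, hxx, ← ht]; ring
    have hwmem : w ∈ (ℝ ∙ x)ᗮ :=
      Submodule.mem_orthogonal_singleton_iff_inner_right.mpr hxw
    have hpyth : 1 = t ^ 2 + ‖w‖ ^ 2 := by
      have hy2 : y = t • x + w := by rw [hw]; abel
      have : ‖t • x + w‖ ^ 2 = ‖t • x‖ ^ 2 + 2 * ⟪t • x, w⟫ + ‖w‖ ^ 2 :=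
        norm_add_sq_real _ _
      rw [← hy2, hy, real_inner_smul_left, hxw] at this
      have hnx : ‖t • x‖ ^ 2 = t ^ 2 := by
        rw [norm_smul, hx, mul_one, Real.norm_eq_abs, sq_abs]
      simpa [hnx] using this
    have hsum : ‖w‖ ^ 2 = ∑ i, ⟪(B i : EuclideanSpace ℝ (Fin (m + 1))), y⟫ ^ 2 := by
      set W : (ℝ ∙ x)ᗮ := ⟨w, hwmem⟩ with hW
      have h1 : ‖w‖ = ‖B.repr W‖ := by rw [B.repr.norm_map]; rfl
      have h2 : ‖B.repr W‖ ^ 2 = ∑ i, (B.repr W i) ^ 2 := by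
        rw [EuclideanSpace.norm_eq, Real.sq_sqrt (by positivity)]
        simp [Real.norm_eq_abs, sq_abs]
      have h3 : ∀ i, B.repr W i = ⟪(B i : EuclideanSpace ℝ (Fin (m + 1))), y⟫ := by
        intro i
        rw [B.repr_apply_apply]
        have : (⟪B i, W⟫ : ℝ) = ⟪(B i : EuclideanSpace ℝ (Fin (m + 1))), w⟫ := rfl
        rw [this, hw, inner_sub_right, real_inner_smul_right]
        have hbx : ⟪(B i : EuclideanSpace ℝ (Fin (m + 1))), x⟫ = 0 := by
          rw [real_inner_comm]
          exact Submodule.mem_orthogonal_singleton_iff_inner_right.mp (B i).2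
        rw [hbx]; ring
      rw [h1, h2]
      exact Finset.sum_congr rfl fun i _ => by rw [h3 i]
    rw [hsum] at hpyth
    linarith

noncomputable def rotIso (x b : EuclideanSpace ℝ (Fin (m + 1))) (hx : ‖x‖ = 1) (hb : ‖b‖ = 1)
    (hxb : ⟪x, b⟫ = 0) (s : ℝ) :
    EuclideanSpace ℝ (Fin (m + 1)) ≃ₗᵢ[ℝ] EuclideanSpace ℝ (Fin (m + 1)) :=
  ((rotAux x b s).isometryOfInner (rotAux_inner x b hx hb hxb s)).toLinearIsometryEquiv rfl

lemma rotIso_apply (x b : EuclideanSpace ℝ (Fin (m + 1))) (hx : ‖x‖ = 1) (hb : ‖b‖ = 1)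
    (hxb : ⟪x, b⟫ = 0) (s : ℝ) (y : EuclideanSpace ℝ (Fin (m + 1))) :
    rotIso x b hx hb hxb s y = rotAux x b s y := rfl

instance : IsFiniteMeasure (sphereMeasure m) := by
  unfold sphereMeasure; infer_instance

lemma integrable_sphere (g : unitSphere m → ℝ) (hg : Continuous g) :
    Integrable g (sphereMeasure m) := by
  apply hg.integrable_of_hasCompactSupport
  exact IsCompact.of_isClosed_subset isCompact_univ (isClosed_tsupport g) (Set.subset_univ _)

lemma spin_identity (x b : EuclideanSpace ℝ (Fin (m + 1))) (hx : ‖x‖ = 1) (hb : ‖b‖ = 1)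
    (hxb : ⟪x, b⟫ = 0) (φ φ' : ℝ → ℝ)
    (hd : ∀ u ∈ Set.Icc (-1:ℝ) 1, HasDerivAt φ (φ' u) u)
    (hc' : ContinuousOn φ' (Set.Icc (-1:ℝ) 1)) :
    ∫ y : unitSphere m, φ' ⟪x, (y : EuclideanSpace ℝ (Fin (m + 1)))⟫
        * ⟪b, (y : EuclideanSpace ℝ (Fin (m + 1)))⟫ ^ 2 ∂(sphereMeasure m)
      = ∫ y : unitSphere m, ⟪x, (y : EuclideanSpace ℝ (Fin (m + 1)))⟫
        * φ ⟪x, (y : EuclideanSpace ℝ (Fin (m + 1)))⟫ ∂(sphereMeasure m) := by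
  have hxx : ⟪x, x⟫ = 1 := by rw [real_inner_self_eq_norm_mul_norm, hx]; norm_num
  have hbb : ⟪b, b⟫ = 1 := by rw [real_inner_self_eq_norm_mul_norm, hb]; norm_num
  have hbx : ⟪b, x⟫ = 0 := by rw [real_inner_comm]; exact hxb
  set T : unitSphere m → ℝ := fun y => ⟪x, (y : EuclideanSpace ℝ (Fin (m + 1)))⟫ with hT
  set B : unitSphere m → ℝ := fun y => ⟪b, (y : EuclideanSpace ℝ (Fin (m + 1)))⟫ with hBdef
  have hTcont : Continuous T := Continuous.inner continuous_const continuous_subtype_val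
  have hBcont : Continuous B := Continuous.inner continuous_const continuous_subtype_val
  have hφc : ContinuousOn φ (Set.Icc (-1:ℝ) 1) :=
    fun u hu => ((hd u hu).continuousAt).continuousWithinAt
  -- T y ^ 2 + B y ^ 2 ≤ 1
  have hTB : ∀ y : unitSphere m, T y ^ 2 + B y ^ 2 ≤ 1 := by
    intro y
    have hy1 : ‖(y : EuclideanSpace ℝ (Fin (m + 1)))‖ = 1 := mem_sphere_zero_iff_norm.mp y.2
    have hyy : ⟪(y : EuclideanSpace ℝ (Fin (m + 1))), (y : EuclideanSpace ℝ (Fin (m + 1)))⟫ = 1 := by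
      rw [real_inner_self_eq_norm_mul_norm, hy1]; norm_num
    set w : EuclideanSpace ℝ (Fin (m + 1)) :=
      (y : EuclideanSpace ℝ (Fin (m + 1))) - T y • x - B y • b with hw
    have hnn : 0 ≤ ⟪w, w⟫ := real_inner_self_nonneg
    have hexp : ⟪w, w⟫ = 1 - T y ^ 2 - B y ^ 2 := by
      simp only [hw, inner_sub_left, inner_sub_right, real_inner_smul_left,
        real_inner_smul_right, hxx, hbb, hxb, hbx, hyy,
        real_inner_comm x (y : EuclideanSpace ℝ (Fin (m + 1))),
        real_inner_comm b (y : EuclideanSpace ℝ (Fin (m + 1)))]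
      ring
    linarith [hexp ▸ hnn]
  have habs : ∀ (s : ℝ) (y : unitSphere m),
      (Real.cos s * T y - Real.sin s * B y) ∈ Set.Icc (-1:ℝ) 1 := by
    intro s y
    have h1 := hTB y
    have h2 := Real.sin_sq_add_cos_sq s
    constructor <;> nlinarith [sq_nonneg (Real.sin s * T y + Real.cos s * B y),
      sq_nonneg (Real.cos s * T y - Real.sin s * B y + 1),
      sq_nonneg (Real.cos s * T y - Real.sin s * B y - 1)]
  have habs2 : ∀ (s : ℝ) (y : unitSphere m), |Real.sin s * T y + Real.cos s * B y| ≤ 1 := by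
    intro s y
    have h1 := hTB y
    have h2 := Real.sin_sq_add_cos_sq s
    rw [abs_le]
    constructor <;> nlinarith [sq_nonneg (Real.cos s * T y - Real.sin s * B y),
      sq_nonneg (Real.sin s * T y + Real.cos s * B y + 1),
      sq_nonneg (Real.sin s * T y + Real.cos s * B y - 1)]
  set F : ℝ → unitSphere m → ℝ := fun s y =>
    φ (Real.cos s * T y - Real.sin s * B y) * (Real.sin s * T y + Real.cos s * B y) with hF
  set F' : ℝ → unitSphere m → ℝ := fun s y =>
    φ' (Real.cos s * T y - Real.sin s * B y) * (-Real.sin s * T y - Real.cos s * B y)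
        * (Real.sin s * T y + Real.cos s * B y)
      + φ (Real.cos s * T y - Real.sin s * B y) * (Real.cos s * T y - Real.sin s * B y)
    with hF'
  have hA : ∀ s : ℝ, Continuous fun y => Real.cos s * T y - Real.sin s * B y :=
    fun s => (continuous_const.mul hTcont).sub (continuous_const.mul hBcont)
  have hS : ∀ s : ℝ, Continuous fun y => Real.sin s * T y + Real.cos s * B y :=
    fun s => (continuous_const.mul hTcont).add (continuous_const.mul hBcont)
  have hN : ∀ s : ℝ, Continuous fun y => -Real.sin s * T y - Real.cos s * B y :=
    fun s => (continuous_const.mul hTcont).sub (continuous_const.mul hBcont)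
  have hFcont : ∀ s, Continuous (F s) :=
    fun s => (hφc.comp_continuous (hA s) (habs s)).mul (hS s)
  have hF'cont : ∀ s, Continuous (F' s) := fun s =>
    (((hc'.comp_continuous (hA s) (habs s)).mul (hN s)).mul (hS s)).add
      ((hφc.comp_continuous (hA s) (habs s)).mul (hA s))
  have hTmem : ∀ y : unitSphere m, T y ∈ Set.Icc (-1:ℝ) 1 := by
    intro y
    have h1 := hTB y
    constructor <;> nlinarith [sq_nonneg (B y), sq_nonneg (T y + 1), sq_nonneg (T y - 1)]
  -- rotation invariance: the integral of F s is independent of s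
  have hHconst : ∀ s : ℝ,
      ∫ y, F s y ∂(sphereMeasure m) = ∫ y, F 0 y ∂(sphereMeasure m) := by
    intro s
    set e := rotIso x b hx hb hxb s with he
    have hT_rot : ∀ y : unitSphere m,
        T (sphereMap e y) = Real.cos s * T y - Real.sin s * B y := by
      intro y
      show ⟪x, rotAux x b s (y : EuclideanSpace ℝ (Fin (m + 1)))⟫ = _
      rw [rotAux_apply]
      simp only [inner_add_right, real_inner_smul_right, hxx, hxb]
      ring
    have hB_rot : ∀ y : unitSphere m,
        B (sphereMap e y) = Real.sin s * T y + Real.cos s * B y := by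
      intro y
      show ⟪b, rotAux x b s (y : EuclideanSpace ℝ (Fin (m + 1)))⟫ = _
      rw [rotAux_apply]
      simp only [inner_add_right, real_inner_smul_right, hbb, hbx]
      ring
    have hgc : Continuous fun z : unitSphere m => φ (T z) * B z :=
      (hφc.comp_continuous hTcont hTmem).mul hBcont
    calc ∫ y, F s y ∂(sphereMeasure m)
        = ∫ y, (fun z : unitSphere m => φ (T z) * B z) (sphereMap e y) ∂(sphereMeasure m) := by
          apply integral_congr_ae
          filter_upwards with y
          simp only [hF, hT_rot y, hB_rot y]
      _ = ∫ y, φ (T y) * B y ∂(sphereMeasure m) := integral_sphereMap e _ hgc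
      _ = ∫ y, F 0 y ∂(sphereMeasure m) := by
          apply integral_congr_ae
          filter_upwards with y
          simp [hF]
  -- bounds for the dominated convergence argument
  obtain ⟨C, hC⟩ := IsCompact.exists_bound_of_continuousOn isCompact_Icc hφc
  obtain ⟨C', hC'⟩ := IsCompact.exists_bound_of_continuousOn isCompact_Icc hc'
  have hmem1 : (-1:ℝ) ∈ Set.Icc (-1:ℝ) 1 := by constructor <;> norm_num
  have hC0 : 0 ≤ C := le_trans (norm_nonneg _) (hC (-1) hmem1)
  have hC'0 : 0 ≤ C' := le_trans (norm_nonneg _) (hC' (-1) hmem1)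
  -- differentiation under the integral sign
  have key := hasDerivAt_integral_of_dominated_loc_of_deriv_le (F := F) (F' := F')
    (μ := sphereMeasure m) (x₀ := (0:ℝ)) (bound := fun _ => C' + C) (s := ball 0 1) (ball_mem_nhds _ one_pos)
    (Filter.Eventually.of_forall fun s => (hFcont s).aestronglyMeasurable)
    (integrable_sphere _ (hFcont 0))
    ((hF'cont 0).aestronglyMeasurable)
    (ae_of_all _ fun y s _ => ?_)
    (integrable_const _)
    (ae_of_all _ fun y s _ => ?_)
  rotate_left
  · -- the bound
    have h1 : |φ' (Real.cos s * T y - Real.sin s * B y)| ≤ C' := hC' _ (habs s y)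
    have h2 : |(-Real.sin s * T y - Real.cos s * B y)| ≤ 1 := by
      have heq : -Real.sin s * T y - Real.cos s * B y
          = -(Real.sin s * T y + Real.cos s * B y) := by ring
      rw [heq, abs_neg]; exact habs2 s y
    have h3 := habs2 s y
    have h4 : |φ (Real.cos s * T y - Real.sin s * B y)| ≤ C := hC _ (habs s y)
    have h5 : |Real.cos s * T y - Real.sin s * B y| ≤ 1 := by
      rw [abs_le]; exact ⟨(habs s y).1, (habs s y).2⟩
    have p1 : |φ' (Real.cos s * T y - Real.sin s * B y)|
        * |(-Real.sin s * T y - Real.cos s * B y)| ≤ C' * 1 :=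
      mul_le_mul h1 h2 (abs_nonneg _) hC'0
    have p2 : |φ' (Real.cos s * T y - Real.sin s * B y)|
        * |(-Real.sin s * T y - Real.cos s * B y)| * |Real.sin s * T y + Real.cos s * B y|
          ≤ C' * 1 * 1 :=
      mul_le_mul p1 h3 (abs_nonneg _) (by nlinarith)
    have p3 : |φ (Real.cos s * T y - Real.sin s * B y)|
        * |Real.cos s * T y - Real.sin s * B y| ≤ C * 1 :=
      mul_le_mul h4 h5 (abs_nonneg _) hC0
    have := abs_add_le (φ' (Real.cos s * T y - Real.sin s * B y)
        * (-Real.sin s * T y - Real.cos s * B y) * (Real.sin s * T y + Real.cos s * B y))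
      (φ (Real.cos s * T y - Real.sin s * B y) * (Real.cos s * T y - Real.sin s * B y))
    rw [abs_mul, abs_mul, abs_mul] at this
    show ‖F' s y‖ ≤ C' + C
    rw [Real.norm_eq_abs]
    calc |F' s y| ≤ _ := this
      _ ≤ C' * 1 * 1 + C * 1 := add_le_add p2 p3
      _ = C' + C := by ring
  · -- differentiability in s
    have ha : HasDerivAt (fun u => Real.cos u * T y - Real.sin u * B y)
        (-Real.sin s * T y - Real.cos s * B y) s := by
      have h1 := (Real.hasDerivAt_cos s).mul_const (T y)
      have h2 := (Real.hasDerivAt_sin s).mul_const (B y)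
      exact h1.sub h2
    have hsd : HasDerivAt (fun u => Real.sin u * T y + Real.cos u * B y)
        (Real.cos s * T y + -Real.sin s * B y) s :=
      ((Real.hasDerivAt_sin s).mul_const (T y)).add ((Real.hasDerivAt_cos s).mul_const (B y))
    have hφa : HasDerivAt φ (φ' (Real.cos s * T y - Real.sin s * B y))
        (Real.cos s * T y - Real.sin s * B y) := hd _ (habs s y)
    have hcomp : HasDerivAt (fun u => F u y) _ s := (hφa.comp s ha).mul hsd
    refine hcomp.congr_deriv ?_
    simp only [hF', Function.comp_apply]
    ring
  · -- conclude
    have hH0 : HasDerivAt (fun s => ∫ y, F s y ∂(sphereMeasure m)) 0 0 := by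
      have heq : (fun s => ∫ y, F s y ∂(sphereMeasure m))
          = fun _ => ∫ y, F 0 y ∂(sphereMeasure m) := funext hHconst
      rw [heq]; exact hasDerivAt_const _ _
    have hzero : ∫ y, F' 0 y ∂(sphereMeasure m) = 0 := key.2.unique hH0
    have hF'0 : ∀ y, F' 0 y = T y * φ (T y) - φ' (T y) * B y ^ 2 := by
      intro y; simp only [hF', Real.cos_zero, Real.sin_zero]; ring
    have hint0 : ∫ y, (T y * φ (T y) - φ' (T y) * B y ^ 2) ∂(sphereMeasure m) = 0 := by
      rw [← hzero]
      exact integral_congr_ae (ae_of_all _ fun y => (hF'0 y).symm)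
    have hi1 : Integrable (fun y => T y * φ (T y)) (sphereMeasure m) :=
      integrable_sphere _ (hTcont.mul (hφc.comp_continuous hTcont hTmem))
    have hi2 : Integrable (fun y => φ' (T y) * B y ^ 2) (sphereMeasure m) :=
      integrable_sphere _ ((hc'.comp_continuous hTcont hTmem).mul (hBcont.pow 2))
    rw [integral_sub hi1 hi2] at hint0
    have : ∫ y, φ' (T y) * B y ^ 2 ∂(sphereMeasure m)
        = ∫ y, T y * φ (T y) ∂(sphereMeasure m) := by linarith
    exact this

lemma sphere_IBP (x : EuclideanSpace ℝ (Fin (m + 1))) (hx : ‖x‖ = 1) (φ φ' : ℝ → ℝ)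
    (hd : ∀ u ∈ Set.Icc (-1:ℝ) 1, HasDerivAt φ (φ' u) u)
    (hc' : ContinuousOn φ' (Set.Icc (-1:ℝ) 1)) :
    ∫ y : unitSphere m, φ' ⟪x, (y : EuclideanSpace ℝ (Fin (m + 1)))⟫
        * (1 - ⟪x, (y : EuclideanSpace ℝ (Fin (m + 1)))⟫ ^ 2) ∂(sphereMeasure m)
      = m * ∫ y : unitSphere m, ⟪x, (y : EuclideanSpace ℝ (Fin (m + 1)))⟫
        * φ ⟪x, (y : EuclideanSpace ℝ (Fin (m + 1)))⟫ ∂(sphereMeasure m) := by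
  obtain ⟨b, hb1, hb2, hb3⟩ := exists_orthonormal_complement_basis x hx
  set T : unitSphere m → ℝ := fun y => ⟪x, (y : EuclideanSpace ℝ (Fin (m + 1)))⟫ with hT
  have hTcont : Continuous T := Continuous.inner continuous_const continuous_subtype_val
  have h1 : ∀ y : unitSphere m,
      1 - T y ^ 2 = ∑ i, ⟪b i, (y : EuclideanSpace ℝ (Fin (m + 1)))⟫ ^ 2 := by
    intro y
    have := hb3 (y : EuclideanSpace ℝ (Fin (m + 1))) (mem_sphere_zero_iff_norm.mp y.2)
    linarith
  have hint : ∀ i, Integrable (fun y : unitSphere m =>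
      φ' (T y) * ⟪b i, (y : EuclideanSpace ℝ (Fin (m + 1)))⟫ ^ 2) (sphereMeasure m) := by
    intro i
    apply integrable_sphere
    have hTmem : ∀ y : unitSphere m, T y ∈ Set.Icc (-1:ℝ) 1 := by
      intro y
      have h2 := abs_real_inner_le_norm x (y : EuclideanSpace ℝ (Fin (m + 1)))
      rw [hx, mem_sphere_zero_iff_norm.mp y.2, one_mul] at h2
      exact abs_le.mp h2
    exact (hc'.comp_continuous hTcont hTmem).mul
      ((Continuous.inner continuous_const continuous_subtype_val).pow 2)
  calc ∫ y : unitSphere m, φ' (T y) * (1 - T y ^ 2) ∂(sphereMeasure m)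
      = ∫ y : unitSphere m, ∑ i,
          φ' (T y) * ⟪b i, (y : EuclideanSpace ℝ (Fin (m + 1)))⟫ ^ 2 ∂(sphereMeasure m) := by
        apply integral_congr_ae
        filter_upwards with y
        rw [h1 y, Finset.mul_sum]
    _ = ∑ i, ∫ y : unitSphere m,
          φ' (T y) * ⟪b i, (y : EuclideanSpace ℝ (Fin (m + 1)))⟫ ^ 2 ∂(sphereMeasure m) :=
        integral_finset_sum _ (fun i _ => hint i)
    _ = ∑ _i : Fin m, ∫ y : unitSphere m, T y * φ (T y) ∂(sphereMeasure m) :=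
        Finset.sum_congr rfl fun i _ =>
          spin_identity x (b i) hx (hb1 i) (hb2 i) φ φ' hd hc'
    _ = m * ∫ y : unitSphere m, T y * φ (T y) ∂(sphereMeasure m) := by
        rw [Finset.sum_const, Finset.card_univ, Fintype.card_fin, nsmul_eq_mul]

set_option maxHeartbeats 2000000 in
lemma poisson_const (hm : 1 ≤ m) (x : EuclideanSpace ℝ (Fin (m + 1))) (hx : ‖x‖ = 1)
    (r : ℝ) (hr0 : 0 ≤ r) (hr1 : r < 1) :
    (1 - r ^ 2) ^ m * ∫ y : unitSphere m,
        ((1 + r ^ 2 - 2 * r * ⟪x, (y : EuclideanSpace ℝ (Fin (m + 1)))⟫) ^ m)⁻¹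
          ∂(sphereMeasure m)
      = ((sphereMeasure m) Set.univ).toReal := by
  obtain ⟨k, rfl⟩ : ∃ k, m = k + 1 := ⟨m - 1, (Nat.succ_pred_eq_of_pos hm).symm⟩
  set T : unitSphere (k+1) → ℝ := fun y => ⟪x, (y : EuclideanSpace ℝ (Fin (k + 1 + 1)))⟫ with hT
  have hTcont : Continuous T := Continuous.inner continuous_const continuous_subtype_val
  have hTabs : ∀ y, |T y| ≤ 1 := by
    intro y
    have h2 := abs_real_inner_le_norm x (y : EuclideanSpace ℝ (Fin (k + 1 + 1)))
    rwa [hx, mem_sphere_zero_iff_norm.mp y.2, one_mul] at h2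
  have hTmem : ∀ y, T y ∈ Set.Icc (-1:ℝ) 1 := fun y => abs_le.mp (hTabs y)
  set J : ℝ → ℝ := fun ρ => ∫ y : unitSphere (k+1),
      ((1 + ρ ^ 2 - 2 * ρ * T y) ^ (k+1))⁻¹ ∂(sphereMeasure (k+1)) with hJ
  set K : ℝ → ℝ := fun ρ => (1 - ρ ^ 2) ^ (k+1) * J ρ with hK
  -- positivity of q
  have hq_pos : ∀ ρ : ℝ, |ρ| < 1 → ∀ u : ℝ, |u| ≤ 1 → (1 - |ρ|) ^ 2 ≤ 1 + ρ ^ 2 - 2 * ρ * u := by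
    intro ρ hρ u hu
    have h1 : ρ * u ≤ |ρ| * |u| := (le_abs_self _).trans (abs_mul ρ u).le
    have h3 : |ρ| * |u| ≤ |ρ| := by nlinarith [abs_nonneg ρ, abs_nonneg u]
    nlinarith [sq_abs ρ]
  -- derivative of K is zero on Ioo (-1) 1
  have hKD : ∀ ρ₀ ∈ Set.Ioo (-1:ℝ) 1, HasDerivAt K 0 ρ₀ := by
    intro ρ₀ hρ₀
    have hρ₀' : |ρ₀| < 1 := abs_lt.mpr ⟨hρ₀.1, hρ₀.2⟩
    have hq₀pos : ∀ u : ℝ, |u| ≤ 1 → 0 < 1 + ρ₀ ^ 2 - 2 * ρ₀ * u := by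
      intro u hu
      have h4 : (0:ℝ) < 1 - |ρ₀| := by linarith
      have := hq_pos ρ₀ hρ₀' u hu
      nlinarith [mul_pos h4 h4]
    set δ : ℝ := (1 - |ρ₀|) / 2 with hδ
    have hδpos : 0 < δ := by rw [hδ]; linarith
    set ρ₁ : ℝ := (1 + |ρ₀|) / 2 with hρ₁
    have hρ₁lt : ρ₁ < 1 := by rw [hρ₁]; linarith
    have hρ₁0 : 0 ≤ ρ₁ := by rw [hρ₁]; positivity
    have hball : ∀ ρ ∈ ball ρ₀ δ, |ρ| ≤ ρ₁ := by
      intro ρ hρ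
      rw [mem_ball, Real.dist_eq] at hρ
      rw [hρ₁]
      have := abs_sub_abs_le_abs_sub ρ ρ₀
      rw [hδ] at hρ
      linarith
    set qlow : ℝ := (1 - ρ₁) ^ 2 with hqlow
    have hqlowpos : 0 < qlow := by rw [hqlow]; exact pow_pos (by linarith) 2
    have hqball : ∀ ρ ∈ ball ρ₀ δ, ∀ y, qlow ≤ 1 + ρ ^ 2 - 2 * ρ * T y := by
      intro ρ hρ y
      have h1 := hq_pos ρ (lt_of_le_of_lt (hball ρ hρ) hρ₁lt) (T y) (hTabs y)
      have h2 := hball ρ hρ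
      have h5 : qlow ≤ (1 - |ρ|) ^ 2 := by
        rw [hqlow]; nlinarith [abs_nonneg ρ]
      linarith
    have hq4 : ∀ ρ ∈ ball ρ₀ δ, ∀ y, 1 + ρ ^ 2 - 2 * ρ * T y ≤ 4 := by
      intro ρ hρ y
      have h1 : -(ρ * T y) ≤ |ρ| * |T y| :=
        le_of_le_of_eq (neg_le_abs _) (abs_mul ρ (T y))
      have h2 := hTabs y
      have h3 := (hball ρ hρ).trans hρ₁lt.le
      nlinarith [abs_nonneg ρ, sq_abs ρ]
    set F : ℝ → unitSphere (k+1) → ℝ := fun ρ y => ((1 + ρ ^ 2 - 2 * ρ * T y) ^ (k+1))⁻¹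
      with hF
    set F' : ℝ → unitSphere (k+1) → ℝ := fun ρ y =>
      -(((k:ℝ)+1) * (1 + ρ ^ 2 - 2 * ρ * T y) ^ k * (2 * ρ - 2 * T y))
        / ((1 + ρ ^ 2 - 2 * ρ * T y) ^ (k+1)) ^ 2 with hF'
    have hqderiv : ∀ (ρ : ℝ) (y : unitSphere (k+1)),
        HasDerivAt (fun u : ℝ => 1 + u ^ 2 - 2 * u * T y) (2 * ρ - 2 * T y) ρ := by
      intro ρ y
      have h1 : HasDerivAt (fun u : ℝ => 1 + u ^ 2) (2 * ρ) ρ := by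
        simpa using (hasDerivAt_pow 2 ρ).const_add 1
      have h2 : HasDerivAt (fun u : ℝ => 2 * u * T y) (2 * T y) ρ := by
        simpa using ((hasDerivAt_id' ρ).const_mul 2).mul_const (T y)
      exact h1.sub h2
    have hFderiv : ∀ ρ ∈ ball ρ₀ δ, ∀ y, HasDerivAt (fun u => F u y) (F' ρ y) ρ := by
      intro ρ hρ y
      have hne : (1 + ρ ^ 2 - 2 * ρ * T y) ^ (k+1) ≠ 0 :=
        pow_ne_zero _ (by have := hqball ρ hρ y; nlinarith)
      have h1 := ((hqderiv ρ y).pow (k+1)).inv hne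
      simp only [Nat.add_sub_cancel] at h1
      have e : (-(((k:ℝ)+1) * (1 + ρ ^ 2 - 2 * ρ * T y) ^ k * (2 * ρ - 2 * T y))
            / ((1 + ρ ^ 2 - 2 * ρ * T y) ^ (k+1)) ^ 2)
          = -(((k+1 : ℕ):ℝ) * (1 + ρ ^ 2 - 2 * ρ * T y) ^ k * (2 * ρ - 2 * T y))
            / ((1 + ρ ^ 2 - 2 * ρ * T y) ^ (k+1)) ^ 2 := by
        push_cast; ring
      simp only [hF', hF]
      rw [e]
      exact h1
    set Cb : ℝ := (((k:ℝ)+1) * 4 ^ k * 4) / qlow ^ (2*(k+1)) with hCb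
    have hqcont : ∀ ρ : ℝ, Continuous fun y : unitSphere (k+1) => 1 + ρ ^ 2 - 2 * ρ * T y :=
      fun ρ => continuous_const.sub (continuous_const.mul hTcont)
    have hmeas : ∀ᶠ ρ in nhds ρ₀, AEStronglyMeasurable (F ρ) (sphereMeasure (k+1)) :=
      Filter.Eventually.of_forall fun ρ =>
        ((((hqcont ρ).pow (k+1)).measurable).inv).aestronglyMeasurable
    have hint : Integrable (F ρ₀) (sphereMeasure (k+1)) := by
      apply integrable_sphere
      have hne : ∀ y, (1 + ρ₀ ^ 2 - 2 * ρ₀ * T y) ^ (k+1) ≠ 0 := fun y =>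
        pow_ne_zero _ (hq₀pos (T y) (hTabs y)).ne'
      exact ((hqcont ρ₀).pow (k+1)).inv₀ hne
    have hmeas' : AEStronglyMeasurable (F' ρ₀) (sphereMeasure (k+1)) := by
      apply Continuous.aestronglyMeasurable
      have hne : ∀ y, ((1 + ρ₀ ^ 2 - 2 * ρ₀ * T y) ^ (k+1)) ^ 2 ≠ 0 := fun y =>
        pow_ne_zero _ (pow_ne_zero _ (hq₀pos (T y) (hTabs y)).ne')
      exact Continuous.div
        ((continuous_const.mul ((hqcont ρ₀).pow k)).mul
          (continuous_const.sub (continuous_const.mul hTcont))).neg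
        (((hqcont ρ₀).pow (k+1)).pow 2) hne
    have hbound : ∀ᵐ y ∂(sphereMeasure (k+1)), ∀ ρ ∈ ball ρ₀ δ, ‖F' ρ y‖ ≤ Cb := by
      apply ae_of_all
      intro y ρ hρ
      have hqpos' : 0 < 1 + ρ ^ 2 - 2 * ρ * T y := lt_of_lt_of_le hqlowpos (hqball ρ hρ y)
      rw [hF', Real.norm_eq_abs, abs_div, abs_neg]
      have hden : |((1 + ρ ^ 2 - 2 * ρ * T y) ^ (k+1)) ^ 2|
          = (1 + ρ ^ 2 - 2 * ρ * T y) ^ (2*(k+1)) := by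
        rw [abs_of_pos (by positivity), ← pow_mul, Nat.mul_comm]
      rw [hden]
      have e2 : |(1 + ρ ^ 2 - 2 * ρ * T y) ^ k| ≤ 4 ^ k := by
        rw [abs_of_pos (by positivity)]
        exact pow_le_pow_left₀ hqpos'.le (hq4 ρ hρ y) k
      have e3 : |2 * ρ - 2 * T y| ≤ 4 := by
        have h2 := hTabs y
        have h3 := (hball ρ hρ).trans hρ₁lt.le
        rw [abs_le]
        constructor
        · linarith [neg_abs_le ρ, le_abs_self (T y)]
        · linarith [le_abs_self ρ, neg_abs_le (T y)]
      have hnum : |((k:ℝ)+1) * (1 + ρ ^ 2 - 2 * ρ * T y) ^ k * (2 * ρ - 2 * T y)|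
          ≤ ((k:ℝ)+1) * 4 ^ k * 4 := by
        rw [abs_mul, abs_mul, abs_of_nonneg (show (0:ℝ) ≤ (k:ℝ)+1 by positivity)]
        have p1 : |(1 + ρ ^ 2 - 2 * ρ * T y) ^ k| * |2 * ρ - 2 * T y| ≤ 4 ^ k * 4 :=
          mul_le_mul e2 e3 (abs_nonneg _) (by positivity)
        calc ((k:ℝ)+1) * |(1 + ρ ^ 2 - 2 * ρ * T y) ^ k| * |2 * ρ - 2 * T y|
            = ((k:ℝ)+1) * (|(1 + ρ ^ 2 - 2 * ρ * T y) ^ k| * |2 * ρ - 2 * T y|) := by ring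
          _ ≤ ((k:ℝ)+1) * (4 ^ k * 4) := by
              exact mul_le_mul_of_nonneg_left p1 (by positivity)
          _ = ((k:ℝ)+1) * 4 ^ k * 4 := by ring
      have hdenlow : qlow ^ (2*(k+1)) ≤ (1 + ρ ^ 2 - 2 * ρ * T y) ^ (2*(k+1)) :=
        pow_le_pow_left₀ hqlowpos.le (hqball ρ hρ y) _
      exact le_of_le_of_eq (div_le_div₀ (by positivity) hnum (by positivity) hdenlow) rfl
    have hdiff : ∀ᵐ y ∂(sphereMeasure (k+1)), ∀ ρ ∈ ball ρ₀ δ,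
        HasDerivAt (fun u => F u y) (F' ρ y) ρ :=
      ae_of_all _ fun y ρ hρ => hFderiv ρ hρ y
    have key := hasDerivAt_integral_of_dominated_loc_of_deriv_le (ball_mem_nhds ρ₀ hδpos) hmeas hint hmeas'
      hbound (integrable_const Cb) hdiff
    have hJD : HasDerivAt J (∫ y, F' ρ₀ y ∂(sphereMeasure (k+1))) ρ₀ := key.2
    have hpoly : HasDerivAt (fun ρ : ℝ => (1 - ρ ^ 2) ^ (k+1))
        (((k:ℝ)+1) * (1 - ρ₀ ^ 2) ^ k * (-(2 * ρ₀))) ρ₀ := by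
      have h1 : HasDerivAt (fun ρ : ℝ => 1 - ρ ^ 2) (-(2 * ρ₀)) ρ₀ := by
        simpa using (hasDerivAt_pow 2 ρ₀).const_sub 1
      have h2 := h1.pow (k+1)
      simp only [Nat.add_sub_cancel] at h2
      have e : (((k:ℝ)+1) * (1 - ρ₀ ^ 2) ^ k * (-(2 * ρ₀)))
          = (((k+1 : ℕ):ℝ) * (1 - ρ₀ ^ 2) ^ k * (-(2 * ρ₀))) := by push_cast; ring
      rw [e]
      exact h2
    have hKD' := hpoly.mul hJD
    suffices hval : ((k:ℝ)+1) * (1 - ρ₀ ^ 2) ^ k * (-(2 * ρ₀)) * J ρ₀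
        + (1 - ρ₀ ^ 2) ^ (k+1) * ∫ y, F' ρ₀ y ∂(sphereMeasure (k+1)) = 0 by
      rw [← hval]
      exact hKD'
    -- the IBP identity
    set φ : ℝ → ℝ := fun u => ((1 + ρ₀ ^ 2 - 2 * ρ₀ * u) ^ (k+1))⁻¹ with hφ
    set φ' : ℝ → ℝ := fun u =>
      -(((k:ℝ)+1) * (1 + ρ₀ ^ 2 - 2 * ρ₀ * u) ^ k * (-(2 * ρ₀)))
        / ((1 + ρ₀ ^ 2 - 2 * ρ₀ * u) ^ (k+1)) ^ 2 with hφ'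
    have hqp : ∀ u ∈ Set.Icc (-1:ℝ) 1, 0 < 1 + ρ₀ ^ 2 - 2 * ρ₀ * u :=
      fun u hu => hq₀pos u (abs_le.mpr hu)
    have hd : ∀ u ∈ Set.Icc (-1:ℝ) 1, HasDerivAt φ (φ' u) u := by
      intro u hu
      have hqd : HasDerivAt (fun v : ℝ => 1 + ρ₀ ^ 2 - 2 * ρ₀ * v) (-(2 * ρ₀)) u := by
        simpa using ((hasDerivAt_id' u).const_mul (2 * ρ₀)).const_sub (1 + ρ₀ ^ 2)
      have hne : (1 + ρ₀ ^ 2 - 2 * ρ₀ * u) ^ (k+1) ≠ 0 := pow_ne_zero _ (hqp u hu).ne'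
      have h1 := (hqd.pow (k+1)).inv hne
      simp only [Nat.add_sub_cancel] at h1
      have e : (-(((k:ℝ)+1) * (1 + ρ₀ ^ 2 - 2 * ρ₀ * u) ^ k * (-(2 * ρ₀)))
            / ((1 + ρ₀ ^ 2 - 2 * ρ₀ * u) ^ (k+1)) ^ 2)
          = -(((k+1 : ℕ):ℝ) * (1 + ρ₀ ^ 2 - 2 * ρ₀ * u) ^ k * (-(2 * ρ₀)))
            / ((1 + ρ₀ ^ 2 - 2 * ρ₀ * u) ^ (k+1)) ^ 2 := by
        push_cast; ring
      simp only [hφ, hφ']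
      rw [e]
      exact h1
    have hc' : ContinuousOn φ' (Set.Icc (-1:ℝ) 1) := by
      apply ContinuousOn.div
      · exact Continuous.continuousOn (by fun_prop)
      · exact Continuous.continuousOn (by fun_prop)
      · intro u hu
        exact pow_ne_zero _ (pow_ne_zero _ (hqp u hu).ne')
    have hIBP := sphere_IBP x hx φ φ' hd hc'
    -- pointwise identity
    have hpt : ∀ y : unitSphere (k+1),
        (1 - ρ₀ ^ 2) * F' ρ₀ y - 2 * ((k:ℝ)+1) * ρ₀ * φ (T y)
          = 2 * ((k:ℝ)+1) * (T y * φ (T y)) - 2 * (φ' (T y) * (1 - T y ^ 2)) := by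
      intro y
      have hq0 : (1 + ρ₀ ^ 2 - 2 * ρ₀ * T y) ≠ 0 := (hq₀pos (T y) (hTabs y)).ne'
      simp only [hF', hφ, hφ']
      field_simp
      ring
    -- integrability of all pieces
    have hφTc : Continuous fun y : unitSphere (k+1) => φ (T y) := by
      have hne : ∀ y, (1 + ρ₀ ^ 2 - 2 * ρ₀ * T y) ^ (k+1) ≠ 0 := fun y =>
        pow_ne_zero _ (hq₀pos (T y) (hTabs y)).ne'
      exact ((hqcont ρ₀).pow (k+1)).inv₀ hne
    have hφ'Tc : Continuous fun y : unitSphere (k+1) => φ' (T y) :=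
      hc'.comp_continuous hTcont hTmem
    have hi1 : Integrable (F' ρ₀) (sphereMeasure (k+1)) := key.1
    have hi2 : Integrable (fun y => φ (T y)) (sphereMeasure (k+1)) := integrable_sphere _ hφTc
    have hi3 : Integrable (fun y => T y * φ (T y)) (sphereMeasure (k+1)) :=
      integrable_sphere _ (hTcont.mul hφTc)
    have hi4 : Integrable (fun y => φ' (T y) * (1 - T y ^ 2)) (sphereMeasure (k+1)) :=
      integrable_sphere _ (hφ'Tc.mul (continuous_const.sub (hTcont.pow 2)))
    have hJρ₀ : J ρ₀ = ∫ y, φ (T y) ∂(sphereMeasure (k+1)) := rfl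
    have hint_eq : (1 - ρ₀ ^ 2) * (∫ y, F' ρ₀ y ∂(sphereMeasure (k+1)))
          - 2 * ((k:ℝ)+1) * ρ₀ * J ρ₀
        = 2 * ((k:ℝ)+1) * (∫ y, T y * φ (T y) ∂(sphereMeasure (k+1)))
          - 2 * (∫ y, φ' (T y) * (1 - T y ^ 2) ∂(sphereMeasure (k+1))) := by
      rw [hJρ₀, ← integral_const_mul, ← integral_const_mul, ← integral_const_mul,
        ← integral_const_mul, ← integral_sub (hi1.const_mul _) (hi2.const_mul _),
        ← integral_sub (hi3.const_mul _) (hi4.const_mul _)]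
      exact integral_congr_ae (ae_of_all _ fun y => hpt y)
    have hF'int : (1 - ρ₀ ^ 2) * (∫ y, F' ρ₀ y ∂(sphereMeasure (k+1)))
        = 2 * ((k:ℝ)+1) * ρ₀ * J ρ₀ := by
      have hcast : ((k+1 : ℕ) : ℝ) = ((k:ℝ)+1) := by push_cast; ring
      rw [hcast] at hIBP
      linarith [hint_eq, hIBP]
    have hρ2 : (1 - ρ₀ ^ 2) ≠ 0 := by nlinarith [hρ₀.1, hρ₀.2]
    have hps : (1 - ρ₀ ^ 2) ^ (k+1) = (1 - ρ₀ ^ 2) ^ k * (1 - ρ₀ ^ 2) := pow_succ _ _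
    rw [hps]
    linear_combination (1 - ρ₀ ^ 2) ^ k * hF'int
  -- K is constant on [0, r]
  have hcont : ContinuousOn K (Set.Icc 0 r) := by
    intro ρ hρ
    exact ((hKD ρ ⟨lt_of_lt_of_le (by norm_num) hρ.1, lt_of_le_of_lt hρ.2 hr1⟩).continuousAt).continuousWithinAt
  have hderiv : ∀ ρ ∈ Set.Ico 0 r, HasDerivWithinAt K 0 (Set.Ici ρ) ρ := fun ρ hρ =>
    (hKD ρ ⟨lt_of_lt_of_le (by norm_num) hρ.1, lt_trans hρ.2 hr1⟩).hasDerivWithinAt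
  have hconst := constant_of_has_deriv_right_zero hcont hderiv r (Set.right_mem_Icc.mpr hr0)
  have hK0 : K 0 = ((sphereMeasure (k+1)) Set.univ).toReal := by
    have h1 : J 0 = ((sphereMeasure (k+1)) Set.univ).toReal := by
      rw [hJ]
      norm_num [integral_const, measureReal_def]
    rw [hK]
    norm_num [h1]
  exact hconst.trans hK0

lemma integrable_sphere' {G : Type*} [NormedAddCommGroup G] (g : unitSphere m → G)
    (hg : Continuous g) : Integrable g (sphereMeasure m) := by
  apply hg.integrable_of_hasCompactSupport
  exact IsCompact.of_isClosed_subset isCompact_univ (isClosed_tsupport g) (Set.subset_univ _)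

lemma sphereMeasure_pos (m : ℕ) : 0 < ((sphereMeasure m) Set.univ).toReal := by
  have h1 : (sphereMeasure m) Set.univ
      = (Module.finrank ℝ (EuclideanSpace ℝ (Fin (m+1)))) *
        volume (ball (0:EuclideanSpace ℝ (Fin (m+1))) 1) :=
    Measure.toSphere_apply_univ _
  rw [h1]
  apply ENNReal.toReal_pos
  · apply mul_ne_zero
    · simp [finrank_euclideanSpace_fin]
    · exact (measure_ball_pos _ _ (by norm_num)).ne'
  · exact ENNReal.mul_ne_top (ENNReal.natCast_ne_top _) measure_ball_lt_top.ne

/-- The hyperharmonic extension of a map `f : S^m → ℝ^ν`, given at `z` by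
`F(z) = (1 − ‖z‖²)^m / σ(S^m) · ∫_{S^m} f(y) / ‖z − y‖^{2m} dσ(y)`. -/
noncomputable def hyperharmonicExt (m ν : ℕ)
    (f : unitSphere m → EuclideanSpace ℝ (Fin ν))
    (z : EuclideanSpace ℝ (Fin (m + 1))) : EuclideanSpace ℝ (Fin ν) :=
  ((1 - ‖z‖ ^ 2) ^ m / (sphereMeasure m Set.univ).toReal) •
    ∫ y : unitSphere m,
      (‖z - (y : EuclideanSpace ℝ (Fin (m + 1)))‖ ^ (2 * m))⁻¹ • f y ∂(sphereMeasure m)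

set_option maxHeartbeats 2000000 in
/-- **Pointwise distance estimate for the hyperharmonic extension.**  For a continuous
`f : S^m → ℝ^ν` with hyperharmonic extension `F`, every `ε > 0`, `x ∈ S^m` and
`r ∈ [0, 1)`, one has
`dist(F(r x), f(S^m)) ≤ ε + (1 − r²)^m 4^m / σ(S^m) · ∫_{S^m} (‖f(y) − f(x)‖ − ε)₊ / ‖y − x‖^{2m} dσ(y)`. -/
theorem hyperharmonicExt_dist_to_image_le (m ν : ℕ) (hm : 1 ≤ m) (hν : 1 ≤ ν)
    (f : C(unitSphere m, EuclideanSpace ℝ (Fin ν)))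
    (ε : ℝ) (hε : 0 < ε) (x : unitSphere m) (r : ℝ) (hr0 : 0 ≤ r) (hr1 : r < 1) :
    ENNReal.ofReal
        (Metric.infDist
          (hyperharmonicExt m ν ⇑f (r • (x : EuclideanSpace ℝ (Fin (m + 1)))))
          (Set.range ⇑f)) ≤
      ENNReal.ofReal ε +
        ENNReal.ofReal ((1 - r ^ 2) ^ m * 4 ^ m / (sphereMeasure m Set.univ).toReal) *
          ∫⁻ y : unitSphere m,
            ENNReal.ofReal
              (max (‖f y - f x‖ - ε) 0 /
                ‖(y : EuclideanSpace ℝ (Fin (m + 1))) - (x : EuclideanSpace ℝ (Fin (m + 1)))‖ ^ (2 * m))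
            ∂(sphereMeasure m) := by
  have hx1 : ‖(x : EuclideanSpace ℝ (Fin (m+1)))‖ = 1 := mem_sphere_zero_iff_norm.mp x.2
  have hσpos : 0 < ((sphereMeasure m) Set.univ).toReal := sphereMeasure_pos m
  have hr2 : (0:ℝ) ≤ 1 - r ^ 2 := by nlinarith
  set c : ℝ := (1 - r ^ 2) ^ m / ((sphereMeasure m) Set.univ).toReal with hc
  have hc0 : 0 ≤ c := div_nonneg (pow_nonneg hr2 m) hσpos.le
  have hnrm : ‖r • (x : EuclideanSpace ℝ (Fin (m+1)))‖ = r := by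
    rw [norm_smul, hx1, Real.norm_eq_abs, abs_of_nonneg hr0, mul_one]
  set Kr : unitSphere m → ℝ :=
    fun y => (‖r • (x : EuclideanSpace ℝ (Fin (m+1))) - ↑y‖ ^ (2*m))⁻¹ with hKr
  have hlow : ∀ y : unitSphere m, 1 - r ≤ ‖r • (x : EuclideanSpace ℝ (Fin (m+1))) - ↑y‖ := by
    intro y
    have h1 : ‖(y : EuclideanSpace ℝ (Fin (m+1)))‖
        - ‖r • (x : EuclideanSpace ℝ (Fin (m+1)))‖
        ≤ ‖(y : EuclideanSpace ℝ (Fin (m+1))) - r • (x : EuclideanSpace ℝ (Fin (m+1)))‖ :=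
      norm_sub_norm_le _ _
    rw [mem_sphere_zero_iff_norm.mp y.2, hnrm, norm_sub_rev] at h1
    exact h1
  have hKpos : ∀ y : unitSphere m, 0 < ‖r • (x : EuclideanSpace ℝ (Fin (m+1))) - ↑y‖ :=
    fun y => lt_of_lt_of_le (by linarith) (hlow y)
  have hKrc : Continuous Kr :=
    ((continuous_const.sub continuous_subtype_val).norm.pow (2*m)).inv₀
      (fun y => pow_ne_zero _ (hKpos y).ne')
  have hKrnn : ∀ y, 0 ≤ Kr y := fun y => inv_nonneg.mpr (by positivity)
  -- Poisson kernel normalization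
  have hKq : ∀ y : unitSphere m, Kr y
      = ((1 + r ^ 2 - 2 * r * ⟪(x : EuclideanSpace ℝ (Fin (m+1))),
          (y : EuclideanSpace ℝ (Fin (m+1)))⟫) ^ m)⁻¹ := by
    intro y
    simp only [hKr]
    have hb : ‖r • (x : EuclideanSpace ℝ (Fin (m+1))) - ↑y‖ ^ 2
        = 1 + r ^ 2 - 2 * r * ⟪(x : EuclideanSpace ℝ (Fin (m+1))),
            (y : EuclideanSpace ℝ (Fin (m+1)))⟫ := by
      rw [norm_sub_sq_real, hnrm, real_inner_smul_left, mem_sphere_zero_iff_norm.mp y.2]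
      ring
    rw [pow_mul, hb]
  have hIK : ∫ y, Kr y ∂(sphereMeasure m)
      = ∫ y : unitSphere m, ((1 + r ^ 2 - 2 * r * ⟪(x : EuclideanSpace ℝ (Fin (m+1))),
          (y : EuclideanSpace ℝ (Fin (m+1)))⟫) ^ m)⁻¹ ∂(sphereMeasure m) :=
    integral_congr_ae (ae_of_all _ hKq)
  have hP1 : c * ∫ y, Kr y ∂(sphereMeasure m) = 1 := by
    rw [hc, hIK, div_mul_eq_mul_div, poisson_const hm _ hx1 r hr0 hr1, div_self hσpos.ne']
  -- integrability
  have hfc : Continuous (⇑f) := f.continuous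
  have hint1 : Integrable (fun y => Kr y • f y) (sphereMeasure m) :=
    integrable_sphere' _ (hKrc.smul hfc)
  have hint2 : Integrable (fun y => Kr y • f x) (sphereMeasure m) :=
    integrable_sphere' _ (hKrc.smul continuous_const)
  have hintK : Integrable Kr (sphereMeasure m) := integrable_sphere _ hKrc
  set gp : unitSphere m → ℝ := fun y => max (‖f y - f x‖ - ε) 0 with hg
  have hgc : Continuous gp :=
    (((hfc.sub continuous_const).norm).sub continuous_const).max continuous_const
  have hgnn : ∀ y, 0 ≤ gp y := fun y => le_max_right _ _
  have hKg : Integrable (fun y => Kr y * gp y) (sphereMeasure m) :=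
    integrable_sphere _ (hKrc.mul hgc)
  -- the difference formula
  have hF_eq : hyperharmonicExt m ν ⇑f (r • (x : EuclideanSpace ℝ (Fin (m+1))))
      = c • ∫ y, Kr y • f y ∂(sphereMeasure m) := by
    rw [hyperharmonicExt, hnrm]
  have e1 : ∫ y, Kr y • (f y - f x) ∂(sphereMeasure m)
      = (∫ y, Kr y • f y ∂(sphereMeasure m)) - ∫ y, Kr y • f x ∂(sphereMeasure m) := by
    rw [← integral_sub hint1 hint2]
    apply integral_congr_ae
    filter_upwards with y
    rw [smul_sub]
  have e2 : ∫ y, Kr y • f x ∂(sphereMeasure m) = (∫ y, Kr y ∂(sphereMeasure m)) • f x :=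
    integral_smul_const _ _
  have hdiff : hyperharmonicExt m ν ⇑f (r • (x : EuclideanSpace ℝ (Fin (m+1)))) - f x
      = c • ∫ y, Kr y • (f y - f x) ∂(sphereMeasure m) := by
    calc hyperharmonicExt m ν ⇑f (r • (x : EuclideanSpace ℝ (Fin (m+1)))) - f x
        = c • (∫ y, Kr y • f y ∂(sphereMeasure m)) - (1:ℝ) • f x := by
          rw [hF_eq, one_smul]
      _ = c • (∫ y, Kr y • f y ∂(sphereMeasure m))
          - (c * ∫ y, Kr y ∂(sphereMeasure m)) • f x := by rw [hP1]
      _ = c • ((∫ y, Kr y • f y ∂(sphereMeasure m))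
          - (∫ y, Kr y ∂(sphereMeasure m)) • f x) := by
          rw [smul_sub, mul_smul]
      _ = c • ∫ y, Kr y • (f y - f x) ∂(sphereMeasure m) := by rw [← e2, ← e1]
  -- norm estimate
  have hnorm_int : ∫ y, ‖Kr y • (f y - f x)‖ ∂(sphereMeasure m)
      = ∫ y, Kr y * ‖f y - f x‖ ∂(sphereMeasure m) := by
    apply integral_congr_ae
    filter_upwards with y
    rw [norm_smul, Real.norm_eq_abs, abs_of_nonneg (hKrnn y)]
  have hbound1 : ‖hyperharmonicExt m ν ⇑f (r • (x : EuclideanSpace ℝ (Fin (m+1)))) - f x‖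
      ≤ c * ∫ y, Kr y * ‖f y - f x‖ ∂(sphereMeasure m) := by
    rw [hdiff, norm_smul, Real.norm_eq_abs, abs_of_nonneg hc0]
    apply mul_le_mul_of_nonneg_left _ hc0
    rw [← hnorm_int]
    exact norm_integral_le_integral_norm _
  have hpt2 : ∀ y, Kr y * ‖f y - f x‖ ≤ Kr y * ε + Kr y * gp y := by
    intro y
    have h1 : 0 ≤ ε + gp y - ‖f y - f x‖ := by
      have := le_max_left (‖f y - f x‖ - ε) (0:ℝ)
      rw [hg]
      linarith
    nlinarith [mul_nonneg (hKrnn y) h1]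
  have hint3 : Integrable (fun y => Kr y * ‖f y - f x‖) (sphereMeasure m) :=
    integrable_sphere _ (hKrc.mul (hfc.sub continuous_const).norm)
  have hmono := integral_mono hint3 ((hintK.mul_const ε).add hKg) hpt2
  simp only [Pi.add_apply] at hmono
  rw [integral_add (hintK.mul_const ε) hKg, integral_mul_const] at hmono
  have hI_nn : 0 ≤ ∫ y, Kr y * gp y ∂(sphereMeasure m) :=
    integral_nonneg fun y => mul_nonneg (hKrnn y) (hgnn y)
  have hreal : Metric.infDist
        (hyperharmonicExt m ν ⇑f (r • (x : EuclideanSpace ℝ (Fin (m+1))))) (Set.range ⇑f)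
      ≤ ε + c * ∫ y, Kr y * gp y ∂(sphereMeasure m) := by
    have h0 := Metric.infDist_le_dist_of_mem
      (x := hyperharmonicExt m ν ⇑f (r • (x : EuclideanSpace ℝ (Fin (m+1)))))
      (show f x ∈ Set.range ⇑f from Set.mem_range_self x)
    rw [dist_eq_norm] at h0
    have h2 : c * ∫ y, Kr y * ‖f y - f x‖ ∂(sphereMeasure m)
        ≤ c * ((∫ y, Kr y ∂(sphereMeasure m)) * ε + ∫ y, Kr y * gp y ∂(sphereMeasure m)) :=
      mul_le_mul_of_nonneg_left hmono hc0
    have h3 : c * ((∫ y, Kr y ∂(sphereMeasure m)) * ε + ∫ y, Kr y * gp y ∂(sphereMeasure m))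
        = ε + c * ∫ y, Kr y * gp y ∂(sphereMeasure m) := by
      rw [mul_add, show c * ((∫ y, Kr y ∂(sphereMeasure m)) * ε)
        = (c * ∫ y, Kr y ∂(sphereMeasure m)) * ε by ring, hP1, one_mul]
    linarith [h0.trans (hbound1.trans (h2.trans_eq h3))]
  -- pointwise comparison with the right-hand side integrand
  have h4m : ∀ y : unitSphere m, Kr y * gp y
      ≤ 4 ^ m * (gp y / ‖(y : EuclideanSpace ℝ (Fin (m+1)))
        - (x : EuclideanSpace ℝ (Fin (m+1)))‖ ^ (2*m)) := by
    intro y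
    by_cases hxy : (y : EuclideanSpace ℝ (Fin (m+1))) = (x : EuclideanSpace ℝ (Fin (m+1)))
    · have hyx : y = x := Subtype.ext hxy
      have hg0 : gp y = 0 := by
        rw [hg]
        simp [hyx, hε.le]
      rw [hg0]
      simp
    · have hpos : 0 < ‖(y : EuclideanSpace ℝ (Fin (m+1)))
          - (x : EuclideanSpace ℝ (Fin (m+1)))‖ := by
        rw [norm_pos_iff, sub_ne_zero]
        exact hxy
      have htri : ‖(y : EuclideanSpace ℝ (Fin (m+1))) - (x : EuclideanSpace ℝ (Fin (m+1)))‖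
          ≤ 2 * ‖r • (x : EuclideanSpace ℝ (Fin (m+1))) - ↑y‖ := by
        have t1 : ‖(y : EuclideanSpace ℝ (Fin (m+1))) - (x : EuclideanSpace ℝ (Fin (m+1)))‖
            ≤ ‖(y : EuclideanSpace ℝ (Fin (m+1)))
              - r • (x : EuclideanSpace ℝ (Fin (m+1)))‖
            + ‖r • (x : EuclideanSpace ℝ (Fin (m+1)))
              - (x : EuclideanSpace ℝ (Fin (m+1)))‖ := norm_sub_le_norm_sub_add_norm_sub _ _ _
        have t2 : ‖r • (x : EuclideanSpace ℝ (Fin (m+1)))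
            - (x : EuclideanSpace ℝ (Fin (m+1)))‖ = 1 - r := by
          rw [show r • (x : EuclideanSpace ℝ (Fin (m+1)))
              - (x : EuclideanSpace ℝ (Fin (m+1)))
              = (r - 1) • (x : EuclideanSpace ℝ (Fin (m+1))) by rw [sub_smul, one_smul],
            norm_smul, hx1, Real.norm_eq_abs, abs_of_nonpos (by linarith), mul_one]
          ring
        have t3 := hlow y
        rw [norm_sub_rev (y : EuclideanSpace ℝ (Fin (m+1)))
          (r • (x : EuclideanSpace ℝ (Fin (m+1))))] at t1
        linarith
      have hpow : ‖(y : EuclideanSpace ℝ (Fin (m+1)))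
          - (x : EuclideanSpace ℝ (Fin (m+1)))‖ ^ (2*m)
          ≤ 4 ^ m * ‖r • (x : EuclideanSpace ℝ (Fin (m+1))) - ↑y‖ ^ (2*m) := by
        calc ‖(y : EuclideanSpace ℝ (Fin (m+1)))
            - (x : EuclideanSpace ℝ (Fin (m+1)))‖ ^ (2*m)
            ≤ (2 * ‖r • (x : EuclideanSpace ℝ (Fin (m+1))) - ↑y‖) ^ (2*m) :=
              pow_le_pow_left₀ (norm_nonneg _) htri _
          _ = 4 ^ m * ‖r • (x : EuclideanSpace ℝ (Fin (m+1))) - ↑y‖ ^ (2*m) := by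
              rw [mul_pow, pow_mul, pow_mul]
              norm_num
      have hA : (0:ℝ) < ‖r • (x : EuclideanSpace ℝ (Fin (m+1))) - ↑y‖ ^ (2*m) :=
        pow_pos (hKpos y) _
      have hD : (0:ℝ) < ‖(y : EuclideanSpace ℝ (Fin (m+1)))
          - (x : EuclideanSpace ℝ (Fin (m+1)))‖ ^ (2*m) := pow_pos hpos _
      rw [show (4:ℝ) ^ m * (gp y / ‖(y : EuclideanSpace ℝ (Fin (m+1)))
            - (x : EuclideanSpace ℝ (Fin (m+1)))‖ ^ (2*m))
          = (4 ^ m * gp y) / ‖(y : EuclideanSpace ℝ (Fin (m+1)))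
            - (x : EuclideanSpace ℝ (Fin (m+1)))‖ ^ (2*m) by ring,
        le_div_iff₀ hD]
      have step : Kr y * gp y * ‖(y : EuclideanSpace ℝ (Fin (m+1)))
            - (x : EuclideanSpace ℝ (Fin (m+1)))‖ ^ (2*m)
          ≤ Kr y * gp y * (4 ^ m * ‖r • (x : EuclideanSpace ℝ (Fin (m+1))) - ↑y‖ ^ (2*m)) :=
        mul_le_mul_of_nonneg_left hpow (mul_nonneg (hKrnn y) (hgnn y))
      have hKA : Kr y * ‖r • (x : EuclideanSpace ℝ (Fin (m+1))) - ↑y‖ ^ (2*m) = 1 := by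
        simp only [hKr]
        exact inv_mul_cancel₀ hA.ne'
      calc Kr y * gp y * ‖(y : EuclideanSpace ℝ (Fin (m+1)))
            - (x : EuclideanSpace ℝ (Fin (m+1)))‖ ^ (2*m)
          ≤ Kr y * gp y * (4 ^ m * ‖r • (x : EuclideanSpace ℝ (Fin (m+1))) - ↑y‖ ^ (2*m)) := step
        _ = 4 ^ m * gp y * (Kr y * ‖r • (x : EuclideanSpace ℝ (Fin (m+1))) - ↑y‖ ^ (2*m)) := by
            ring
        _ = 4 ^ m * gp y := by rw [hKA, mul_one]
  -- ENNReal endgame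
  have hGmeas : Measurable fun y : unitSphere m =>
      ENNReal.ofReal (gp y / ‖(y : EuclideanSpace ℝ (Fin (m+1)))
        - (x : EuclideanSpace ℝ (Fin (m+1)))‖ ^ (2*m)) :=
    ((hgc.measurable).div
      (((continuous_subtype_val.sub continuous_const).norm.pow (2*m)).measurable)).ennreal_ofReal
  have hmain : ENNReal.ofReal (c * ∫ y, Kr y * gp y ∂(sphereMeasure m))
      ≤ ENNReal.ofReal ((1 - r ^ 2) ^ m * 4 ^ m / (sphereMeasure m Set.univ).toReal) *
        ∫⁻ y : unitSphere m, ENNReal.ofReal (gp y / ‖(y : EuclideanSpace ℝ (Fin (m+1)))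
          - (x : EuclideanSpace ℝ (Fin (m+1)))‖ ^ (2*m)) ∂(sphereMeasure m) := by
    rw [ENNReal.ofReal_mul hc0,
      ofReal_integral_eq_lintegral_ofReal hKg
        (ae_of_all _ fun y => mul_nonneg (hKrnn y) (hgnn y))]
    have l1 : ∫⁻ y, ENNReal.ofReal (Kr y * gp y) ∂(sphereMeasure m)
        ≤ ∫⁻ y : unitSphere m, ENNReal.ofReal (4 ^ m * (gp y /
          ‖(y : EuclideanSpace ℝ (Fin (m+1)))
            - (x : EuclideanSpace ℝ (Fin (m+1)))‖ ^ (2*m))) ∂(sphereMeasure m) :=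
      lintegral_mono fun y => ENNReal.ofReal_le_ofReal (h4m y)
    have l2 : ∫⁻ y : unitSphere m, ENNReal.ofReal (4 ^ m * (gp y /
          ‖(y : EuclideanSpace ℝ (Fin (m+1)))
            - (x : EuclideanSpace ℝ (Fin (m+1)))‖ ^ (2*m))) ∂(sphereMeasure m)
        = ENNReal.ofReal (4 ^ m) * ∫⁻ y : unitSphere m, ENNReal.ofReal (gp y /
          ‖(y : EuclideanSpace ℝ (Fin (m+1)))
            - (x : EuclideanSpace ℝ (Fin (m+1)))‖ ^ (2*m)) ∂(sphereMeasure m) := by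
      rw [← lintegral_const_mul _ hGmeas]
      apply lintegral_congr
      intro y
      rw [ENNReal.ofReal_mul (by positivity)]
    calc ENNReal.ofReal c * ∫⁻ y, ENNReal.ofReal (Kr y * gp y) ∂(sphereMeasure m)
        ≤ ENNReal.ofReal c * (ENNReal.ofReal (4 ^ m) *
            ∫⁻ y : unitSphere m, ENNReal.ofReal (gp y /
              ‖(y : EuclideanSpace ℝ (Fin (m+1)))
                - (x : EuclideanSpace ℝ (Fin (m+1)))‖ ^ (2*m)) ∂(sphereMeasure m)) := by
          rw [← l2]
          exact mul_le_mul_right l1 _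
      _ = (ENNReal.ofReal c * ENNReal.ofReal (4 ^ m)) *
            ∫⁻ y : unitSphere m, ENNReal.ofReal (gp y /
              ‖(y : EuclideanSpace ℝ (Fin (m+1)))
                - (x : EuclideanSpace ℝ (Fin (m+1)))‖ ^ (2*m)) ∂(sphereMeasure m) := by
          rw [mul_assoc]
      _ = ENNReal.ofReal ((1 - r ^ 2) ^ m * 4 ^ m / (sphereMeasure m Set.univ).toReal) *
            ∫⁻ y : unitSphere m, ENNReal.ofReal (gp y /
              ‖(y : EuclideanSpace ℝ (Fin (m+1)))
                - (x : EuclideanSpace ℝ (Fin (m+1)))‖ ^ (2*m)) ∂(sphereMeasure m) := by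
          rw [← ENNReal.ofReal_mul hc0, hc]
          congr 2
          ring
  calc ENNReal.ofReal (Metric.infDist
        (hyperharmonicExt m ν ⇑f (r • (x : EuclideanSpace ℝ (Fin (m+1))))) (Set.range ⇑f))
      ≤ ENNReal.ofReal (ε + c * ∫ y, Kr y * gp y ∂(sphereMeasure m)) :=
        ENNReal.ofReal_le_ofReal hreal
    _ = ENNReal.ofReal ε + ENNReal.ofReal (c * ∫ y, Kr y * gp y ∂(sphereMeasure m)) :=
        ENNReal.ofReal_add hε.le (mul_nonneg hc0 hI_nn)
    _ ≤ ENNReal.ofReal ε +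
        ENNReal.ofReal ((1 - r ^ 2) ^ m * 4 ^ m / (sphereMeasure m Set.univ).toReal) *
          ∫⁻ y : unitSphere m, ENNReal.ofReal (gp y /
            ‖(y : EuclideanSpace ℝ (Fin (m+1)))
              - (x : EuclideanSpace ℝ (Fin (m+1)))‖ ^ (2*m)) ∂(sphereMeasure m) :=
        add_le_add_right hmain _
end

section
/- Let M be a metric space with the geodesic midpoint property: for all a, b ∈ M and every t ∈ [0, dist(a,b)] there exists c ∈ M with dist(a,c) = t and dist(c,b) = dist(a,b) − t. Then for every positive integer ℓ, all points a₁, …, a_ℓ ∈ M and all radii r₁, …, r_ℓ ∈ (0, ∞), there exist ℓ' ∈ {1, …, ℓ}, points a'₁, …, a'_{ℓ'} ∈ M and radii r'₁, …, r'_{ℓ'} ∈ (0, ∞) such that: (i) the union of the open balls B(aᵢ, rᵢ), 1 ≤ i ≤ ℓ, is contained in the union of the open balls B(a'ᵢ, r'ᵢ), 1 ≤ i ≤ ℓ'; (ii) ∑_{i=1}^{ℓ'} r'ᵢ ≤ ∑_{i=1}^{ℓ} rᵢ; and (iii) the closed balls closedBall(a'ᵢ, r'ᵢ), 1 ≤ i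 ≤ ℓ', are pairwise disjoint. -/
open Metric

private lemma not_pairwise_exists {α : Type*} {R : α → α → Prop} :
    ∀ L : List α, ¬ L.Pairwise R → ∃ x y T, L.Perm (x :: y :: T) ∧ ¬ R x y := by
  intro L
  induction L with
  | nil => intro h; exact absurd List.Pairwise.nil h
  | cons h t ih =>
    intro hnp
    rw [List.pairwise_cons] at hnp
    by_cases h1 : ∀ y ∈ t, R h y
    · have h2 : ¬ t.Pairwise R := fun hp => hnp ⟨h1, hp⟩
      obtain ⟨x, y, T, hperm, hxy⟩ := ih h2
      exact ⟨x, y, h :: T, ((hperm.cons h).trans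
        ((List.Perm.swap x h (y :: T)).trans ((List.Perm.swap y h T).cons x))), hxy⟩
    · push_neg at h1
      obtain ⟨y, hy, hRy⟩ := h1
      obtain ⟨s₁, s₂, rfl⟩ := List.mem_iff_append.mp hy
      exact ⟨h, y, s₁ ++ s₂, (List.perm_middle.cons h), hRy⟩

/-- Merge two intersecting closed balls into one ball covering both open balls. -/
private lemma merge_two {M : Type*} [MetricSpace M]
    (hgeo : ∀ a b : M, ∀ t : ℝ, 0 ≤ t → t ≤ dist a b →
      ∃ c : M, dist a c = t ∧ dist c b = dist a b - t)
    (x y : M) (rx ry : ℝ) (hrx : 0 < rx) (hry : 0 < ry)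
    (hnd : ¬ Disjoint (Metric.closedBall x rx) (Metric.closedBall y ry)) :
    ∃ (c : M) (s : ℝ), 0 < s ∧ s ≤ rx + ry ∧
      Metric.ball x rx ⊆ Metric.ball c s ∧ Metric.ball y ry ⊆ Metric.ball c s := by
  rw [Set.not_disjoint_iff] at hnd
  obtain ⟨z, hz1, hz2⟩ := hnd
  rw [Metric.mem_closedBall] at hz1 hz2
  have hd : dist x y ≤ rx + ry := by
    calc dist x y ≤ dist x z + dist z y := dist_triangle x z y
    _ ≤ rx + ry := by rw [dist_comm z x] at hz1; linarith
  set d := dist x y with hdd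
  by_cases h1 : d + ry ≤ rx
  · refine ⟨x, rx, hrx, by linarith, subset_rfl, fun w hw => ?_⟩
    rw [Metric.mem_ball] at hw ⊢
    calc dist w x ≤ dist w y + dist y x := dist_triangle w y x
    _ < ry + d := by rw [dist_comm y x]; linarith
    _ ≤ rx := by linarith
  · by_cases h2 : d + rx ≤ ry
    · refine ⟨y, ry, hry, by linarith, fun w hw => ?_, subset_rfl⟩
      rw [Metric.mem_ball] at hw ⊢
      calc dist w y ≤ dist w x + dist x y := dist_triangle w x y
      _ < rx + d := by linarith
      _ ≤ ry := by linarith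
    · push_neg at h1 h2
      have ht0 : (0:ℝ) ≤ (d + ry - rx) / 2 := by linarith
      have htd : (d + ry - rx) / 2 ≤ d := by linarith
      obtain ⟨c, hc1, hc2⟩ := hgeo x y ((d + ry - rx) / 2) ht0 htd
      refine ⟨c, (d + rx + ry) / 2, by positivity, by linarith, ?_, ?_⟩
      · intro w hw
        rw [Metric.mem_ball] at hw ⊢
        calc dist w c ≤ dist w x + dist x c := dist_triangle w x c
        _ < rx + (d + ry - rx) / 2 := by linarith [hc1]
        _ = (d + rx + ry) / 2 := by ring
      · intro w hw
        rw [Metric.mem_ball] at hw ⊢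
        calc dist w c ≤ dist w y + dist y c := dist_triangle w y c
        _ < ry + (d - (d + ry - rx) / 2) := by rw [dist_comm y c]; linarith [hc2]
        _ = (d + rx + ry) / 2 := by ring

private lemma aux_merge {M : Type*} [MetricSpace M]
    (hgeo : ∀ a b : M, ∀ t : ℝ, 0 ≤ t → t ≤ dist a b →
      ∃ c : M, dist a c = t ∧ dist c b = dist a b - t) :
    ∀ (n : ℕ) (L : List (M × ℝ)), L.length ≤ n → L ≠ [] → (∀ p ∈ L, 0 < p.2) →
    ∃ L' : List (M × ℝ), L' ≠ [] ∧ L'.length ≤ L.length ∧ (∀ p ∈ L', 0 < p.2) ∧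
      (⋃ p ∈ L, Metric.ball p.1 p.2) ⊆ (⋃ p ∈ L', Metric.ball p.1 p.2) ∧
      (L'.map Prod.snd).sum ≤ (L.map Prod.snd).sum ∧
      L'.Pairwise (fun p q => Disjoint (Metric.closedBall p.1 p.2)
        (Metric.closedBall q.1 q.2)) := by
  intro n
  induction n with
  | zero =>
    intro L hlen hne _
    exact absurd (List.length_eq_zero_iff.mp (Nat.le_zero.mp hlen)) hne
  | succ n ih =>
    intro L hlen hne hpos
    by_cases hp : L.Pairwise (fun p q => Disjoint (Metric.closedBall p.1 p.2)
        (Metric.closedBall q.1 q.2))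
    · exact ⟨L, hne, le_rfl, hpos, subset_rfl, le_rfl, hp⟩
    · obtain ⟨pq1, pq2, T, hperm, hnd⟩ := not_pairwise_exists L hp
      have hmem : ∀ p ∈ pq1 :: pq2 :: T, 0 < p.2 := fun p hpm =>
        hpos p (hperm.mem_iff.mpr hpm)
      obtain ⟨c, s, hs0, hsle, hsub1, hsub2⟩ := merge_two hgeo pq1.1 pq2.1 pq1.2 pq2.2
        (hmem pq1 (by simp)) (hmem pq2 (by simp)) hnd
      have hlenL : L.length = T.length + 2 := by
        rw [hperm.length_eq]; simp
      have hlen' : ((c, s) :: T).length ≤ n := by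
        simp only [List.length_cons]
        omega
      have hpos' : ∀ p ∈ (c, s) :: T, 0 < p.2 := by
        intro p hpm
        rcases List.mem_cons.mp hpm with h | h
        · subst h; exact hs0
        · exact hmem p (by simp [h])
      obtain ⟨L', hne', hlen'', hpos'', hsub'', hsum'', hpw''⟩ :=
        ih ((c, s) :: T) hlen' (by simp) hpos'
      refine ⟨L', hne', ?_, hpos'', ?_, ?_, hpw''⟩
      · simp only [List.length_cons] at hlen''
        omega
      · refine subset_trans ?_ hsub''
        intro w hw
        simp only [Set.mem_iUnion, exists_prop] at hw ⊢
        obtain ⟨p, hpm, hpw⟩ := hw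
        rw [hperm.mem_iff] at hpm
        rcases List.mem_cons.mp hpm with h | h
        · exact ⟨(c, s), by simp, hsub1 (h ▸ hpw)⟩
        rcases List.mem_cons.mp h with h' | h'
        · exact ⟨(c, s), by simp, hsub2 (h' ▸ hpw)⟩
        · exact ⟨p, by simp [h'], hpw⟩
      · refine le_trans hsum'' ?_
        have : (L.map Prod.snd).sum = ((pq1 :: pq2 :: T).map Prod.snd).sum :=
          (hperm.map Prod.snd).sum_eq
        rw [this]
        simp only [List.map_cons, List.sum_cons]
        linarith

/-- **Merging balls in a geodesic metric space.**
In a metric space with the geodesic midpoint property, any finite family of open balls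
can be covered by a family of pairwise disjoint closed balls (with the same open-ball
covering) whose radii sum to at most the sum of the original radii. -/
theorem merging_balls {M : Type*} [MetricSpace M]
    (hgeo : ∀ a b : M, ∀ t : ℝ, 0 ≤ t → t ≤ dist a b →
      ∃ c : M, dist a c = t ∧ dist c b = dist a b - t)
    (ℓ : ℕ) (hℓ : 1 ≤ ℓ) (a : Fin ℓ → M) (r : Fin ℓ → ℝ) (hr : ∀ i, 0 < r i) :
    ∃ (ℓ' : ℕ), 1 ≤ ℓ' ∧ ℓ' ≤ ℓ ∧
      ∃ (a' : Fin ℓ' → M) (r' : Fin ℓ' → ℝ),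
        (∀ i, 0 < r' i) ∧
        (⋃ i, Metric.ball (a i) (r i)) ⊆ (⋃ i, Metric.ball (a' i) (r' i)) ∧
        (∑ i, r' i) ≤ (∑ i, r i) ∧
        ∀ i j : Fin ℓ', i ≠ j →
          Disjoint (Metric.closedBall (a' i) (r' i)) (Metric.closedBall (a' j) (r' j)) := by
  set L : List (M × ℝ) := List.ofFn (fun i => (a i, r i)) with hL
  have hLlen : L.length = ℓ := by simp [hL]
  have hLne : L ≠ [] := by
    intro h
    rw [h] at hLlen
    simp at hLlen
    omega
  have hLpos : ∀ p ∈ L, 0 < p.2 := by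
    intro p hp
    rw [hL, List.mem_ofFn] at hp
    obtain ⟨i, rfl⟩ := hp
    exact hr i
  obtain ⟨L', hne', hlen', hpos', hsub', hsum', hpw'⟩ :=
    aux_merge hgeo L.length L le_rfl hLne hLpos
  refine ⟨L'.length, ?_, by omega, fun i => (L'.get i).1, fun i => (L'.get i).2, ?_, ?_, ?_, ?_⟩
  · rcases L' with _ | ⟨h, t⟩
    · exact absurd rfl hne'
    · simp
  · intro i
    exact hpos' _ (L'.get_mem i)
  · intro w hw
    simp only [Set.mem_iUnion] at hw ⊢
    obtain ⟨i, hi⟩ := hw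
    have : (a i, r i) ∈ L := by rw [hL, List.mem_ofFn]; exact ⟨i, rfl⟩
    have hw' : w ∈ ⋃ p ∈ L', Metric.ball p.1 p.2 := by
      apply hsub'
      simp only [Set.mem_iUnion, exists_prop]
      exact ⟨(a i, r i), this, hi⟩
    simp only [Set.mem_iUnion, exists_prop] at hw'
    obtain ⟨p, hpm, hpw⟩ := hw'
    obtain ⟨j, hj⟩ := List.mem_iff_get.mp hpm
    exact ⟨j, by rw [hj]; exact hpw⟩
  · have h1 : (L'.map Prod.snd).sum = ∑ i, (L'.get i).2 := by
      conv_lhs => rw [← List.ofFn_get L']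
      rw [List.map_ofFn, List.sum_ofFn]
      rfl
    have h2 : (L.map Prod.snd).sum = ∑ i, r i := by
      rw [hL, List.map_ofFn, List.sum_ofFn]
      rfl
    rw [← h1, ← h2]
    exact hsum'
  · intro i j hij
    rw [List.pairwise_iff_get] at hpw'
    rcases lt_or_gt_of_ne hij with h | h
    · exact hpw' i j h
    · exact (hpw' j i h).symm
end

section
/- Let m ≥ 1 and let a₀, a₁, …, a_{m+1} be the vertices of a regular simplex inscribed in the unit sphere of ℝ^{m+1}, i.e. vectors with ‖aᵢ‖ = 1 for all i and inner product ⟨aᵢ, aⱼ⟩ = −1/(m+1) for all i ≠ j. Then for all x, y ∈ ℝ^{m+1} with ‖x‖ = ‖y‖ = 1 there exists an index i ∈ {0, 1, …, m+1} such that ⟨aᵢ, x⟩ ≥ −1/√(m+1) and ⟨aᵢ, y⟩ ≥ −1/√(m+1). -/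
/-!
The Gram matrix of the `aᵢ` is `(1 + c) I - c J` with `c = 1/(m+1)`. Hence `∑ aᵢ = 0`, and
`‖∑ εᵢ aᵢ‖ ≤ (m+2)/√(m+1)` for all signs `εᵢ`, so `∑ |⟪aᵢ, x - y⟫| ≤ 2 (m+2)/√(m+1)`.
Since `∑ ⟪aᵢ, x⟫ = ∑ ⟪aᵢ, y⟫ = 0`, the identity `2 min u v = u + v - |u - v|` gives
`∑ min ⟪aᵢ, x⟫ ⟪aᵢ, y⟫ ≥ -(m+2)/√(m+1)`, so some term is at least the average `-1/√(m+1)`.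
-/

open Finset RealInnerProductSpace

section

variable {ι E : Type*} [Fintype ι] [NormedAddCommGroup E] [InnerProductSpace ℝ E]
  {a : ι → E} {c : ℝ}

theorem norm_sum_smul_sq_of_inner_eq_neg (ha : ∀ i, ‖a i‖ = 1)
    (hinner : ∀ i j, i ≠ j → ⟪a i, a j⟫ = -c) (ε : ι → ℝ) :
    ‖∑ i, ε i • a i‖ ^ 2 = (1 + c) * ∑ i, ε i ^ 2 - c * (∑ i, ε i) ^ 2 := by
  classical
  have hgram : ∀ i j, ⟪a i, a j⟫ = (if i = j then 1 + c else 0) - c := by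
    intro i j
    by_cases hij : i = j
    · simp [hij, ha]
    · simp [hij, hinner i j hij]
  rw [← real_inner_self_eq_norm_sq, sum_inner]
  simp_rw [inner_sum, real_inner_smul_left, real_inner_smul_right, hgram, mul_sub, mul_ite,
    mul_zero, sum_sub_distrib, sum_ite_eq, mem_univ, if_true]
  rw [sq, sum_mul_sum, mul_sum, mul_sum]
  simp_rw [mul_sum]
  congr 1
  · exact sum_congr rfl fun i _ => by ring
  · exact sum_congr rfl fun i _ => sum_congr rfl fun j _ => by ring

theorem sum_eq_zero_of_inner_eq_neg (ha : ∀ i, ‖a i‖ = 1)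
    (hinner : ∀ i j, i ≠ j → ⟪a i, a j⟫ = -c) (hc : c * (Fintype.card ι - 1) = 1) :
    ∑ i, a i = 0 := by
  have h := norm_sum_smul_sq_of_inner_eq_neg ha hinner fun _ => 1
  simp only [one_smul, one_pow, sum_const, card_univ, nsmul_eq_mul, mul_one] at h
  rw [← norm_eq_zero, ← sq_eq_zero_iff, h]
  linear_combination -(Fintype.card ι : ℝ) * hc

theorem sum_abs_inner_le_of_inner_eq_neg (ha : ∀ i, ‖a i‖ = 1)
    (hinner : ∀ i j, i ≠ j → ⟪a i, a j⟫ = -c) (hc : 0 ≤ c) (z : E) :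
    ∑ i, |⟪a i, z⟫| ≤ √((1 + c) * Fintype.card ι) * ‖z‖ := by
  set ε : ι → ℝ := fun i => SignType.sign ⟪a i, z⟫
  have hε : ∀ i, ε i ^ 2 ≤ 1 := by
    intro i
    simp only [ε]
    generalize SignType.sign ⟪a i, z⟫ = s
    cases s <;> simp
  have hnorm : ‖∑ i, ε i • a i‖ ≤ √((1 + c) * Fintype.card ι) := by
    refine Real.le_sqrt_of_sq_le ?_
    calc ‖∑ i, ε i • a i‖ ^ 2 = (1 + c) * ∑ i, ε i ^ 2 - c * (∑ i, ε i) ^ 2 :=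
          norm_sum_smul_sq_of_inner_eq_neg ha hinner ε
      _ ≤ (1 + c) * ∑ _i : ι, (1 : ℝ) := by
          have := sum_le_sum fun i (_ : i ∈ univ) => hε i
          nlinarith [sq_nonneg (∑ i, ε i)]
      _ = (1 + c) * Fintype.card ι := by simp
  calc ∑ i, |⟪a i, z⟫| = ⟪∑ i, ε i • a i, z⟫ := by
        simp_rw [sum_inner, real_inner_smul_left, ε, sign_mul_self]
    _ ≤ ‖∑ i, ε i • a i‖ * ‖z‖ := real_inner_le_norm _ _
    _ ≤ √((1 + c) * Fintype.card ι) * ‖z‖ := by gcongr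

theorem exists_inner_ge_of_sum_eq_zero [Nonempty ι] (hsum : ∑ i, a i = 0)
    {x y : E} {B : ℝ} (hB : ∑ i, |⟪a i, x - y⟫| ≤ 2 * B) :
    ∃ i, -(B / Fintype.card ι) ≤ ⟪a i, x⟫ ∧ -(B / Fintype.card ι) ≤ ⟪a i, y⟫ := by
  have hsum_inner : ∀ z, ∑ i, ⟪a i, z⟫ = 0 := fun z => by
    rw [← sum_inner, hsum, inner_zero_left]
  have hmin : ∀ u v : ℝ, 2 * min u v = u + v - |u - v| := fun u v => by
    linarith [min_add_max u v, max_sub_min_eq_abs' u v]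
  have hle : ∑ _i : ι, -(B / Fintype.card ι) ≤ ∑ i, min ⟪a i, x⟫ ⟪a i, y⟫ := by
    have hcard : (Fintype.card ι : ℝ) ≠ 0 := by positivity
    have : 2 * ∑ i, min ⟪a i, x⟫ ⟪a i, y⟫ = -∑ i, |⟪a i, x - y⟫| := by
      simp_rw [mul_sum, hmin, sum_sub_distrib, sum_add_distrib, hsum_inner, inner_sub_right]
      ring
    rw [sum_const, card_univ, nsmul_eq_mul, mul_neg, mul_div_cancel₀ _ hcard]
    linarith
  obtain ⟨i, -, hi⟩ := exists_le_of_sum_le univ_nonempty hle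
  exact ⟨i, le_min_iff.mp hi⟩

end

theorem simplex_cap_covering_general (m : ℕ)
    (a : Fin (m + 2) → EuclideanSpace ℝ (Fin (m + 1)))
    (ha : ∀ i, ‖a i‖ = 1)
    (hinner : ∀ i j, i ≠ j → (inner ℝ (a i) (a j) : ℝ) = -(1 / (m + 1)))
    (x y : EuclideanSpace ℝ (Fin (m + 1))) (hx : ‖x‖ = 1) (hy : ‖y‖ = 1) :
    ∃ i : Fin (m + 2),
      -(1 / Real.sqrt (m + 1)) ≤ (inner ℝ (a i) x : ℝ) ∧
      -(1 / Real.sqrt (m + 1)) ≤ (inner ℝ (a i) y : ℝ) := by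
  have hm : (0 : ℝ) < m + 1 := by positivity
  have hc : 1 / (m + 1 : ℝ) * (Fintype.card (Fin (m + 2)) - 1) = 1 := by
    simp only [Fintype.card_fin]; push_cast; field_simp; ring
  have hsqrt : √((1 + 1 / (m + 1 : ℝ)) * Fintype.card (Fin (m + 2))) = (m + 2) / √(m + 1) := by
    rw [eq_div_iff (Real.sqrt_pos.mpr hm).ne', ← Real.sqrt_mul (by positivity),
      Real.sqrt_eq_iff_mul_self_eq (by positivity) (by positivity)]
    simp only [Fintype.card_fin]; push_cast; field_simp; ring
  have hspread : ∑ i, |⟪a i, x - y⟫| ≤ 2 * ((m + 2) / √(m + 1)) :=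
    calc ∑ i, |⟪a i, x - y⟫| ≤ (m + 2) / √(m + 1) * ‖x - y‖ := by
          simpa only [hsqrt] using sum_abs_inner_le_of_inner_eq_neg ha hinner (by positivity) _
      _ ≤ (m + 2) / √(m + 1) * 2 := by
          gcongr
          linarith [norm_sub_le x y]
      _ = _ := mul_comm _ _
  obtain ⟨i, hix, hiy⟩ := exists_inner_ge_of_sum_eq_zero
    (sum_eq_zero_of_inner_eq_neg ha hinner hc) hspread
  have hbound : (m + 2) / √(m + 1) / Fintype.card (Fin (m + 2)) = 1 / √(m + 1 : ℝ) := by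
    simp only [Fintype.card_fin]; push_cast; field_simp
  exact ⟨i, hbound ▸ hix, hbound ▸ hiy⟩

/-- **Covering pairs of points of the sphere by caps of a regular simplex.**
If `a₀, …, a_{m+1}` are the vertices of a regular simplex inscribed in the unit sphere
of `ℝ^{m+1}`, then for all unit vectors `x, y` there exists an index `i` with
`⟨aᵢ, x⟩ ≥ −1/√(m+1)` and `⟨aᵢ, y⟩ ≥ −1/√(m+1)`. -/
theorem simplex_cap_covering (m : ℕ) (hm : 1 ≤ m)
    (a : Fin (m + 2) → EuclideanSpace ℝ (Fin (m + 1)))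
    (ha : ∀ i, ‖a i‖ = 1)
    (hinner : ∀ i j, i ≠ j → (inner ℝ (a i) (a j) : ℝ) = -(1 / (m + 1)))
    (x y : EuclideanSpace ℝ (Fin (m + 1))) (hx : ‖x‖ = 1) (hy : ‖y‖ = 1) :
    ∃ i : Fin (m + 2),
      -(1 / Real.sqrt (m + 1)) ≤ (inner ℝ (a i) x : ℝ) ∧
      -(1 / Real.sqrt (m + 1)) ≤ (inner ℝ (a i) y : ℝ) :=
  simplex_cap_covering_general m a ha hinner x y hx hy
end

section
/- For all real numbers p, q ∈ [0, ∞) and η ∈ (0, 1), there exists a constant C > 0 such that for all real numbers s, t with 0 < s ≤ t, one has (t − s)^p ≤ C · ∫_{ηs}^{t} (t − r)^q · r^{p − 1 − q} dr. -/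
/-!
Since the integrand is nonnegative, the integral only decreases when `[ηs, t]` is shrunk to
`[ηt, t]`. There `r` is comparable to `t`, so `r ^ (p - 1 - q) ≥ c t ^ (p - 1 - q)`, and integrating
`(t - r) ^ q` gives a lower bound `c' t ^ p`, which dominates `c' (t - s) ^ p`.
-/

open MeasureTheory Real Set

lemma integral_sub_rpow {q : ℝ} (hq : -1 < q) (a t : ℝ) :
    ∫ r in a..t, (t - r) ^ q = (t - a) ^ (q + 1) / (q + 1) := by
  have hq1 : q + 1 ≠ 0 := by linarith
  rw [intervalIntegral.integral_comp_sub_left (fun x : ℝ => x ^ q), sub_self,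
    integral_rpow (Or.inl hq), zero_rpow hq1, sub_zero]

section TruncatedPower

variable {q e a t : ℝ}

lemma intervalIntegrable_sub_rpow_mul_rpow (hq : 0 ≤ q) {b : ℝ} (ha : 0 < a) (hab : a ≤ b) :
    IntervalIntegrable (fun r => (t - r) ^ q * r ^ e) volume a b := by
  refine ContinuousOn.intervalIntegrable fun r hr => ContinuousAt.continuousWithinAt ?_
  rw [uIcc_of_le hab] at hr
  exact ((continuous_rpow_const hq).comp (continuous_const.sub continuous_id)).continuousAt.mul
    (continuousAt_rpow_const r e (Or.inl (ha.trans_le hr.1).ne'))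

lemma integral_sub_rpow_mul_rpow_mono_left (hq : 0 ≤ q) {b : ℝ} (ha : 0 < a) (hab : a ≤ b)
    (hbt : b ≤ t) :
    ∫ r in b..t, (t - r) ^ q * r ^ e ≤ ∫ r in a..t, (t - r) ^ q * r ^ e := by
  refine intervalIntegral.integral_mono_interval hab hbt le_rfl ?_
    (intervalIntegrable_sub_rpow_mul_rpow hq ha (hab.trans hbt))
  filter_upwards [ae_restrict_mem measurableSet_Ioc] with r hr
  exact mul_nonneg (rpow_nonneg (sub_nonneg.2 hr.2) q) (rpow_nonneg (ha.trans hr.1).le e)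

lemma mul_integral_sub_rpow_le {m : ℝ} (hq : 0 ≤ q) (ha : 0 < a) (hat : a ≤ t)
    (hm : ∀ r ∈ Icc a t, m ≤ r ^ e) :
    m * ((t - a) ^ (q + 1) / (q + 1)) ≤ ∫ r in a..t, (t - r) ^ q * r ^ e := by
  rw [← integral_sub_rpow (by linarith) a t, ← intervalIntegral.integral_const_mul]
  refine intervalIntegral.integral_mono_on hat ?_ (intervalIntegrable_sub_rpow_mul_rpow hq ha hat)
    fun r hr => ?_
  · exact (continuous_const.mul ((continuous_rpow_const hq).comp
      (continuous_const.sub continuous_id))).intervalIntegrable _ _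
  · rw [mul_comm]
    exact mul_le_mul_of_nonneg_left (hm r hr) (rpow_nonneg (sub_nonneg.2 hr.2) q)

lemma min_rpow_one_mul_rpow_le {η r : ℝ} (hη : 0 < η) (ht : 0 < t) (hr : r ∈ Icc (η * t) t) :
    min (η ^ e) 1 * t ^ e ≤ r ^ e := by
  have hr0 : 0 < r := (mul_pos hη ht).trans_le hr.1
  rcases le_total 0 e with he | he
  · calc min (η ^ e) 1 * t ^ e ≤ η ^ e * t ^ e := by gcongr; exact min_le_left _ _
      _ = (η * t) ^ e := (mul_rpow hη.le ht.le).symm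
      _ ≤ r ^ e := rpow_le_rpow (mul_pos hη ht).le hr.1 he
  · calc min (η ^ e) 1 * t ^ e ≤ 1 * t ^ e := by gcongr; exact min_le_right _ _
      _ = t ^ e := one_mul _
      _ ≤ r ^ e := rpow_le_rpow_of_nonpos hr0 hr.2 he

lemma mul_rpow_le_integral_sub_rpow_mul_rpow {η : ℝ} (hq : 0 ≤ q) (hη : η ∈ Ioo 0 1)
    (ht : 0 < t) :
    min (η ^ e) 1 * (1 - η) ^ (q + 1) / (q + 1) * t ^ (e + q + 1) ≤
      ∫ r in (η * t)..t, (t - r) ^ q * r ^ e := by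
  obtain ⟨hη0, hη1⟩ := hη
  refine le_of_eq_of_le ?_ (mul_integral_sub_rpow_le hq (mul_pos hη0 ht) (by nlinarith)
    fun r hr => min_rpow_one_mul_rpow_le hη0 ht hr)
  rw [show t - η * t = (1 - η) * t by ring, mul_rpow (by linarith) ht.le, add_assoc,
    rpow_add ht]
  ring

end TruncatedPower

/-- **Integral estimate of truncated powers.**  For `p, q ∈ [0, ∞)` and `η ∈ (0, 1)`
there is a constant `C > 0` such that for all `0 < s ≤ t`,
`(t − s)^p ≤ C ∫_{ηs}^{t} (t − r)^q r^{p − 1 − q} dr`. -/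
theorem truncated_power_integral_estimate (p q η : ℝ)
    (hp : 0 ≤ p) (hq : 0 ≤ q) (hη : η ∈ Set.Ioo (0 : ℝ) 1) :
    ∃ C : ℝ, 0 < C ∧
      ∀ s t : ℝ, 0 < s → s ≤ t →
        (t - s) ^ p ≤ C * ∫ r in (η * s)..t, (t - r) ^ q * r ^ (p - 1 - q) := by
  set c := min (η ^ (p - 1 - q)) 1 * (1 - η) ^ (q + 1) / (q + 1)
  have hc : 0 < c := div_pos (mul_pos (lt_min (rpow_pos_of_pos hη.1 _) one_pos)
    (rpow_pos_of_pos (sub_pos.2 hη.2) _)) (by linarith)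
  refine ⟨c⁻¹, inv_pos.2 hc, fun s t hs hst => ?_⟩
  have ht : 0 < t := hs.trans_le hst
  calc (t - s) ^ p ≤ t ^ p := rpow_le_rpow (by linarith) (by linarith) hp
    _ = c⁻¹ * (c * t ^ (p - 1 - q + q + 1)) := by
      rw [show p - 1 - q + q + 1 = p by ring, inv_mul_cancel_left₀ hc.ne']
    _ ≤ c⁻¹ * ∫ r in (η * t)..t, (t - r) ^ q * r ^ (p - 1 - q) := by
      gcongr
      exact mul_rpow_le_integral_sub_rpow_mul_rpow hq hη ht
    _ ≤ c⁻¹ * ∫ r in (η * s)..t, (t - r) ^ q * r ^ (p - 1 - q) := by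
      gcongr
      exact integral_sub_rpow_mul_rpow_mono_left hq (mul_pos hη.1 hs)
        (by nlinarith [hη.1]) (by nlinarith [hη.2])
end

section
/- Let m ≥ 2 be an integer. There exists a constant C > 0 such that for every b > 0, ∫∫_{S^{m−1} × S^{m−1}} (b² + ‖w − z‖²)^{−m} dσ(w) dσ(z) ≤ C / b^{m+1}. -/
/-!
The kernel `k_b(x) = (b² + ‖x‖²)^(-m)` changes by at most the factor `3^m` when `x` moves by
at most `b`. Hence for `w` on the sphere and `1 < r ≤ 1 + b`, `k_b(w - z) ≤ 3^m k_b(r w - z)`,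
and integrating in polar coordinates over this shell, whose radial measure is at least `b`, gives
`b ∫_S k_b(w - z) dσ(w) ≤ 3^m ∫_{ℝ^m} k_b`. By scaling, `∫_{ℝ^m} k_b = b^(-m) ∫_{ℝ^m} k_1`, and
`k_1 = (1 + ‖x‖²)^(-m)` is integrable since `2m > m`. So the inner integral is `O(b^(-m-1))`
uniformly in `z`, and the sphere has finite measure.
-/

open MeasureTheory Metric

/-- The canonical surface measure on the unit sphere `S^{m−1} ⊂ ℝ^m`. -/
noncomputable def sphereMeasure' (m : ℕ) :
    Measure (Metric.sphere (0 : EuclideanSpace ℝ (Fin m)) 1) :=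
  (volume : Measure (EuclideanSpace ℝ (Fin m))).toSphere

open Set
open scoped ENNReal

local notation "dim" => Module.finrank ℝ

theorem ofReal_sub_le_volumeIoiPow_preimage_Ioc (n : ℕ) {a c : ℝ} (ha : 1 ≤ a) :
    ENNReal.ofReal (c - a) ≤ Measure.volumeIoiPow n (Subtype.val ⁻¹' Ioc a c) := by
  have hIoc : Ioc a c ⊆ Ioi 0 := fun x hx ↦ mem_Ioi.2 (by linarith [hx.1])
  rw [Measure.volumeIoiPow, withDensity_apply _ (measurable_subtype_coe measurableSet_Ioc),
    setLIntegral_subtype measurableSet_Ioi _ fun x ↦ ENNReal.ofReal (x ^ n),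
    Subtype.image_preimage_coe, inter_eq_right.2 hIoc, ← Real.volume_Ioc, ← setLIntegral_one]
  exact setLIntegral_mono (by fun_prop) fun x hx ↦ by
    simpa using one_le_pow₀ (ha.trans hx.1.le)

/-- The power `(b² + ‖x‖²)^(-p)` of the rescaled Japanese bracket. -/
noncomputable def bracketKernel {E : Type*} [Norm E] (b : ℝ) (p : ℕ) (x : E) : ℝ≥0∞ :=
  ENNReal.ofReal (((b ^ 2 + ‖x‖ ^ 2) ^ p)⁻¹)

section Kernel

variable {E : Type*} [NormedAddCommGroup E]

theorem bracketKernel_le_three_pow_mul (p : ℕ) {b : ℝ} (hb : 0 < b) {x y : E}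
    (hxy : ‖x - y‖ ≤ b) : bracketKernel b p x ≤ 3 ^ p * bracketKernel b p y := by
  have hy : ‖y‖ ≤ ‖x‖ + b := by linarith [norm_le_norm_add_norm_sub' y x, norm_sub_rev x y]
  have hle : b ^ 2 + ‖y‖ ^ 2 ≤ 3 * (b ^ 2 + ‖x‖ ^ 2) := by
    nlinarith [pow_le_pow_left₀ (norm_nonneg y) hy 2, sq_nonneg (‖x‖ - b)]
  rw [bracketKernel, bracketKernel, ← ENNReal.ofReal_ofNat, ← ENNReal.ofReal_pow zero_le_three,
    ← ENNReal.ofReal_mul (by positivity)]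
  refine ENNReal.ofReal_le_ofReal ?_
  rw [← div_eq_mul_inv, le_div_iff₀ (by positivity), inv_mul_le_iff₀ (by positivity), mul_comm,
    ← mul_pow]
  gcongr

@[fun_prop]
theorem measurable_bracketKernel [MeasurableSpace E] [BorelSpace E] (b : ℝ) (p : ℕ) :
    Measurable (bracketKernel b p : E → ℝ≥0∞) := by
  unfold bracketKernel
  fun_prop

theorem bracketKernel_smul [NormedSpace ℝ E] (b : ℝ) (p : ℕ) (x : E) :
    bracketKernel b p (b • x) = ENNReal.ofReal ((b ^ (2 * p))⁻¹) * bracketKernel 1 p x := by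
  rw [bracketKernel, bracketKernel, pow_mul, ← ENNReal.ofReal_mul (by positivity), ← mul_inv,
    ← mul_pow, norm_smul, Real.norm_eq_abs, mul_pow, sq_abs]
  ring_nf

end Kernel

section Haar

variable {E : Type*} [NormedAddCommGroup E] [NormedSpace ℝ E] [FiniteDimensional ℝ E]
  [MeasurableSpace E] [BorelSpace E] (μ : Measure E) [μ.IsAddHaarMeasure]

theorem lintegral_comp_smul_addHaar (f : E → ℝ≥0∞) {r : ℝ} (hr : r ≠ 0) :
    ∫⁻ x, f (r • x) ∂μ = ENNReal.ofReal |(r ^ dim E)⁻¹| * ∫⁻ x, f x ∂μ := by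
  rw [← smul_eq_mul, ← lintegral_smul_measure, ← Measure.map_addHaar_smul μ hr]
  exact ((Homeomorph.smulOfNeZero r hr).measurableEmbedding.lintegral_map f).symm

theorem lintegral_toSphere_lintegral_volumeIoiPow {f : E → ℝ≥0∞} (hf : Measurable f) :
    ∫⁻ w, ∫⁻ r, f ((r : ℝ) • (w : E)) ∂Measure.volumeIoiPow (dim E - 1) ∂μ.toSphere =
      ∫⁻ x in {0}ᶜ, f x ∂μ := by
  have hg : Measurable fun p : sphere (0 : E) 1 × Ioi (0 : ℝ) ↦ f ((p.2 : ℝ) • (p.1 : E)) :=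
    hf.comp (by fun_prop)
  rw [← lintegral_prod _ hg.aemeasurable, ← lintegral_subtype_comap (by measurability),
    ← μ.measurePreserving_homeomorphUnitSphereProd.lintegral_comp_emb
      (Homeomorph.measurableEmbedding _)]
  congr! with x
  simp [smul_inv_smul₀ (norm_ne_zero_iff.mpr x.2)]

theorem lintegral_toSphere_mul_volumeIoiPow_le {f : sphere (0 : E) 1 → ℝ≥0∞} {g : E → ℝ≥0∞}
    (hf : Measurable f) (hg : Measurable g) {s : Set (Ioi (0 : ℝ))} (hs : MeasurableSet s)
    (hfg : ∀ w, ∀ r ∈ s, f w ≤ g ((r : ℝ) • (w : E))) :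
    (∫⁻ w, f w ∂μ.toSphere) * Measure.volumeIoiPow (dim E - 1) s ≤ ∫⁻ x, g x ∂μ :=
  calc (∫⁻ w, f w ∂μ.toSphere) * Measure.volumeIoiPow (dim E - 1) s
      = ∫⁻ w, ∫⁻ _ in s, f w ∂Measure.volumeIoiPow (dim E - 1) ∂μ.toSphere := by
        simp only [setLIntegral_const, lintegral_mul_const _ hf]
    _ ≤ ∫⁻ w, ∫⁻ r in s, g ((r : ℝ) • (w : E)) ∂Measure.volumeIoiPow (dim E - 1) ∂μ.toSphere :=
        lintegral_mono fun w ↦ setLIntegral_mono' hs (hfg w)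
    _ ≤ ∫⁻ w, ∫⁻ r, g ((r : ℝ) • (w : E)) ∂Measure.volumeIoiPow (dim E - 1) ∂μ.toSphere :=
        lintegral_mono fun w ↦ setLIntegral_le_lintegral _ _
    _ = ∫⁻ x in {0}ᶜ, g x ∂μ := lintegral_toSphere_lintegral_volumeIoiPow μ hg
    _ ≤ ∫⁻ x, g x ∂μ := setLIntegral_le_lintegral _ _

theorem lintegral_bracketKernel_one_lt_top {p : ℕ} (hp : dim E < 2 * p) :
    ∫⁻ x, bracketKernel 1 p x ∂μ < ∞ := by
  have hint := integrable_rpow_neg_one_add_norm_sq (μ := μ) (r := 2 * p) (by exact_mod_cast hp)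
  convert hint.lintegral_lt_top using 4 with x
  rw [bracketKernel, neg_div, mul_div_cancel_left₀ _ two_ne_zero, Real.rpow_neg (by positivity),
    Real.rpow_natCast, one_pow]

theorem lintegral_bracketKernel {b : ℝ} (hb : 0 < b) (p : ℕ) :
    ∫⁻ x, bracketKernel b p x ∂μ =
      ENNReal.ofReal (b ^ dim E / b ^ (2 * p)) * ∫⁻ x, bracketKernel 1 p x ∂μ := by
  calc ∫⁻ x, bracketKernel b p x ∂μ = ∫⁻ x, bracketKernel b p (b • b⁻¹ • x) ∂μ := by
        simp only [smul_inv_smul₀ hb.ne']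
    _ = ENNReal.ofReal (b ^ dim E) * ∫⁻ x, bracketKernel b p (b • x) ∂μ := by
        rw [lintegral_comp_smul_addHaar μ (fun x ↦ bracketKernel b p (b • x)) (inv_ne_zero hb.ne'),
          inv_pow, inv_inv, abs_of_pos (by positivity)]
    _ = _ := by
        simp only [bracketKernel_smul, lintegral_const_mul _ (measurable_bracketKernel 1 p),
          ← mul_assoc, ← ENNReal.ofReal_mul (by positivity : (0 : ℝ) ≤ b ^ dim E), div_eq_mul_inv]

theorem lintegral_toSphere_bracketKernel_sub_mul_le {b : ℝ} (hb : 0 < b) (p : ℕ) (z : E) :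
    (∫⁻ w, bracketKernel b p ((w : E) - z) ∂μ.toSphere) * ENNReal.ofReal b ≤
      3 ^ p * ∫⁻ x, bracketKernel b p x ∂μ := by
  calc (∫⁻ w, bracketKernel b p ((w : E) - z) ∂μ.toSphere) * ENNReal.ofReal b
      ≤ (∫⁻ w, bracketKernel b p ((w : E) - z) ∂μ.toSphere) *
          Measure.volumeIoiPow (dim E - 1) (Subtype.val ⁻¹' Ioc 1 (1 + b)) := by
        gcongr
        simpa using ofReal_sub_le_volumeIoiPow_preimage_Ioc (dim E - 1) (c := 1 + b) le_rfl
    _ ≤ ∫⁻ x, 3 ^ p * bracketKernel b p (x - z) ∂μ := by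
        refine lintegral_toSphere_mul_volumeIoiPow_le μ (by fun_prop) (by fun_prop)
          (measurable_subtype_coe measurableSet_Ioc) fun w r hr ↦
            bracketKernel_le_three_pow_mul p hb ?_
        have hw : ‖(w : E)‖ = 1 := mem_sphere_zero_iff_norm.mp w.2
        have hr' : |1 - (r : ℝ)| ≤ b := abs_le.2 ⟨by linarith [hr.2], by linarith [hr.1]⟩
        have hdiff : (w : E) - z - ((r : ℝ) • (w : E) - z) = (1 - (r : ℝ)) • (w : E) := by
          rw [sub_sub_sub_cancel_right, sub_smul, one_smul]
        rwa [hdiff, norm_smul, hw, mul_one, Real.norm_eq_abs]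
    _ = 3 ^ p * ∫⁻ x, bracketKernel b p x ∂μ := by
        rw [lintegral_const_mul _ (by fun_prop), lintegral_sub_right_eq_self]

theorem lintegral_toSphere_bracketKernel_sub_le {b : ℝ} (hb : 0 < b) (p : ℕ) (z : E) :
    ∫⁻ w, bracketKernel b p ((w : E) - z) ∂μ.toSphere ≤
      ENNReal.ofReal (b ^ dim E / b ^ (2 * p + 1)) * (3 ^ p * ∫⁻ x, bracketKernel 1 p x ∂μ) := by
  rw [← ENNReal.mul_le_mul_iff_left (ENNReal.ofReal_pos.2 hb).ne' ENNReal.ofReal_ne_top]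
  convert lintegral_toSphere_bracketKernel_sub_mul_le μ hb p z using 1
  rw [lintegral_bracketKernel μ hb, mul_comm, ← mul_assoc, ← ENNReal.ofReal_mul hb.le, pow_succ,
    show b * (b ^ dim E / (b ^ (2 * p) * b)) = b ^ dim E / b ^ (2 * p) by field_simp,
    mul_left_comm]

end Haar

/-- **Kernel bound on the sphere.**  For `m ≥ 2` there is a constant `C > 0` such that
for every `b > 0`,
`∬_{S^{m−1} × S^{m−1}} (b² + ‖w − z‖²)^{−m} dσ(w) dσ(z) ≤ C / b^{m+1}`. -/
theorem sphere_kernel_bound (m : ℕ) (hm : 2 ≤ m) :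
    ∃ C : ℝ, 0 < C ∧
      ∀ b : ℝ, 0 < b →
        (∫⁻ z : Metric.sphere (0 : EuclideanSpace ℝ (Fin m)) 1,
            ∫⁻ w : Metric.sphere (0 : EuclideanSpace ℝ (Fin m)) 1,
              ENNReal.ofReal
                (((b ^ 2 + ‖(w : EuclideanSpace ℝ (Fin m)) -
                    (z : EuclideanSpace ℝ (Fin m))‖ ^ 2) ^ m)⁻¹)
              ∂(sphereMeasure' m) ∂(sphereMeasure' m)) ≤
          ENNReal.ofReal (C / b ^ (m + 1)) := by
  unfold sphereMeasure'
  set K := 3 ^ m * (∫⁻ x : EuclideanSpace ℝ (Fin m), bracketKernel 1 m x) *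
    (volume : Measure (EuclideanSpace ℝ (Fin m))).toSphere univ
  have hK : K ≠ ∞ := ENNReal.mul_ne_top (ENNReal.mul_ne_top (by simp)
    (lintegral_bracketKernel_one_lt_top volume (by simp; omega)).ne) (measure_ne_top _ _)
  refine ⟨K.toReal + 1, by positivity, fun b hb ↦ ?_⟩
  calc _ ≤ ∫⁻ _, ENNReal.ofReal (b ^ m / b ^ (2 * m + 1)) *
        (3 ^ m * ∫⁻ x : EuclideanSpace ℝ (Fin m), bracketKernel 1 m x)
          ∂(volume : Measure (EuclideanSpace ℝ (Fin m))).toSphere :=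
        lintegral_mono fun z ↦ by
          have h := lintegral_toSphere_bracketKernel_sub_le volume hb m
            (z : EuclideanSpace ℝ (Fin m))
          rwa [finrank_euclideanSpace_fin] at h
    _ = ENNReal.ofReal (b ^ (m + 1))⁻¹ * K := by
        rw [lintegral_const, mul_assoc, two_mul, add_right_comm, pow_add, div_mul_cancel_right₀
          (by positivity)]
    _ = ENNReal.ofReal (K.toReal / b ^ (m + 1)) := by
        rw [div_eq_inv_mul, ENNReal.ofReal_mul (by positivity), ENNReal.ofReal_toReal hK]
    _ ≤ ENNReal.ofReal ((K.toReal + 1) / b ^ (m + 1)) := by gcongr; linarith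
end
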